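/- arXiv:1604.03162 — 6 statements merged into one kernel-verified Lean document; each statement's English description precedes it below -/
import Mathlib

section
/- Let I = {0,...,r−1} and let Γ = Γ(G;(G_i)_{i∈I}) be a coset geometry of rank r that is a regular hypertope, i.e. Γ is a thin, residually connected incidence geometry and G acts flag-transitively on Γ by right multiplication with only the identity of G fixing a chamber. Then each minimal parabolic subgroup ∩_{j∈I, j≠i} G_j is generated by a single involution ρ_i, and the pair (G, {ρ_0,...,ρ_{r−1}}) is a C-group: the ρ_i generate G and for all K, J ⊆ {0,...,r−1}, ⟨ρ_i : i ∈ K⟩ ∩ ⟨ρ_j : j ∈ J⟩ = ⟨ρ_k : k ∈ K ∩ J⟩. -/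
open Pointwise

/-- An incidence system `(X, *, t, I)`. -/
structure IncidenceSystem (X : Type*) (I : Type*) where
  inc : X → X → Prop
  typ : X → I
  inc_refl : ∀ x, inc x x
  inc_symm : ∀ x y, inc x y → inc y x
  eq_of_inc_of_typ_eq : ∀ x y, inc x y → typ x = typ y → x = y

namespace IncidenceSystem

variable {X : Type*} {I : Type*} (Γ : IncidenceSystem X I)

/-- A flag is a set of pairwise incident elements. -/
def IsFlag (F : Set X) : Prop := ∀ x ∈ F, ∀ y ∈ F, Γ.inc x y

/-- A chamber is a flag of type `I`. -/
def IsChamber (C : Set X) : Prop := Γ.IsFlag C ∧ Γ.typ '' C = Set.univ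

/-- An incidence geometry: every flag is contained in a chamber. -/
def IsGeometry : Prop := ∀ F : Set X, Γ.IsFlag F → ∃ C : Set X, Γ.IsChamber C ∧ F ⊆ C

/-- The set of elements of the residue of a flag `F`: elements outside `F`
incident to every element of `F`. -/
def res (F : Set X) : Set X := {x : X | x ∉ F ∧ ∀ f ∈ F, Γ.inc x f}

/-- The incidence graph induced on a subset `S` is connected. -/
def ConnectedOn (S : Set X) : Prop :=
  S.Nonempty ∧ ∀ x ∈ S, ∀ y ∈ S,
    Relation.ReflTransGen (fun a b : X => a ∈ S ∧ b ∈ S ∧ a ≠ b ∧ Γ.inc a b) x y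

/-- Residual connectedness: the incidence graph of every residue of rank at
least two (including `Γ` itself, the residue of the empty flag) is connected. -/
def ResiduallyConnected : Prop :=
  ∀ F : Set X, Γ.IsFlag F →
    (∃ i j : I, i ≠ j ∧ i ∉ Γ.typ '' F ∧ j ∉ Γ.typ '' F) →
    Γ.ConnectedOn (Γ.res F)

/-- Thinness: every residue of rank one contains exactly two elements. -/
def Thin : Prop :=
  ∀ F : Set X, Γ.IsFlag F → (∃! i : I, i ∉ Γ.typ '' F) →
    ∃ x y : X, x ≠ y ∧ Γ.res F = {x, y}

/-- Firmness: every residue of rank one contains at least two elements. -/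
def Firm : Prop :=
  ∀ F : Set X, Γ.IsFlag F → (∃! i : I, i ∉ Γ.typ '' F) →
    ∃ x y : X, x ≠ y ∧ x ∈ Γ.res F ∧ y ∈ Γ.res F

/-- Two chambers are `i`-adjacent if they differ exactly in their elements of type `i`. -/
def Adjacent (C C' : Set X) (i : I) : Prop :=
  Γ.IsChamber C ∧ Γ.IsChamber C' ∧ C ≠ C' ∧
    {x ∈ C | Γ.typ x ≠ i} = {x ∈ C' | Γ.typ x ≠ i}

/-- Chamber-connectedness of the residue of the flag `F`: any two chambers
containing `F` are linked by a sequence of successively adjacent chambers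
containing `F`. -/
def ChamberConnectedFrom (F : Set X) : Prop :=
  ∀ C C' : Set X, Γ.IsChamber C → Γ.IsChamber C' → F ⊆ C → F ⊆ C' →
    Relation.ReflTransGen
      (fun A B : Set X => F ⊆ A ∧ F ⊆ B ∧ ∃ i : I, Γ.Adjacent A B i) C C'

/-- Strong chamber-connectedness: every residue of rank at least two
(including `Γ` itself) is chamber-connected. -/
def StronglyChamberConnected : Prop :=
  ∀ F : Set X, Γ.IsFlag F →
    (∃ i j : I, i ≠ j ∧ i ∉ Γ.typ '' F ∧ j ∉ Γ.typ '' F) →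
    Γ.ChamberConnectedFrom F

/-- A type-preserving automorphism. -/
def IsAut (φ : Equiv.Perm X) : Prop :=
  (∀ x, Γ.typ (φ x) = Γ.typ x) ∧ ∀ x y, (Γ.inc (φ x) (φ y) ↔ Γ.inc x y)

/-- The group `Aut_I(Γ)` of type-preserving automorphisms. -/
def autGroup : Subgroup (Equiv.Perm X) where
  carrier := {φ : Equiv.Perm X | Γ.IsAut φ}
  one_mem' := ⟨fun _ => rfl, fun _ _ => Iff.rfl⟩
  mul_mem' := by
    rintro φ ψ ⟨ht, hi⟩ ⟨ht', hi'⟩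
    exact ⟨fun x => by rw [Equiv.Perm.mul_apply, ht, ht'],
      fun x y => by rw [Equiv.Perm.mul_apply, Equiv.Perm.mul_apply, hi, hi']⟩
  inv_mem' := by
    rintro φ ⟨ht, hi⟩
    refine ⟨fun x => ?_, fun x y => ?_⟩
    · conv_rhs => rw [← (show φ (φ⁻¹ x) = x from Equiv.apply_symm_apply φ x)]
      rw [ht]
    · conv_rhs => rw [← (show φ (φ⁻¹ x) = x from Equiv.apply_symm_apply φ x),
        ← (show φ (φ⁻¹ y) = y from Equiv.apply_symm_apply φ y)]
      exact (hi _ _).symm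

/-- Two chambers are in the same orbit under `Aut_I(Γ)`. -/
def InSameOrbit (C C' : Set X) : Prop := ∃ φ ∈ Γ.autGroup, ⇑φ '' C = C'

/-- Flag-transitivity: `Aut_I(Γ)` is transitive on the flags of each type. -/
def FlagTransitive : Prop :=
  ∀ F F' : Set X, Γ.IsFlag F → Γ.IsFlag F' → Γ.typ '' F = Γ.typ '' F' →
    ∃ φ ∈ Γ.autGroup, ⇑φ '' F = F'

/-- Chamber-transitivity: `Aut_I(Γ)` is transitive on chambers. -/
def ChamberTransitive : Prop :=
  ∀ C C' : Set X, Γ.IsChamber C → Γ.IsChamber C' → ∃ φ ∈ Γ.autGroup, ⇑φ '' C = C'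

/-- Chirality: `Aut_I(Γ)` has exactly two orbits on chambers, and adjacent
chambers lie in distinct orbits. -/
def Chiral : Prop :=
  (∃ C₁ C₂ : Set X, Γ.IsChamber C₁ ∧ Γ.IsChamber C₂ ∧ ¬ Γ.InSameOrbit C₁ C₂ ∧
    ∀ C : Set X, Γ.IsChamber C → Γ.InSameOrbit C C₁ ∨ Γ.InSameOrbit C C₂) ∧
  ∀ (C C' : Set X) (i : I), Γ.Adjacent C C' i → ¬ Γ.InSameOrbit C C'

/-- The `J`-truncation of `Γ`. -/
def truncation (J : Set I) : IncidenceSystem {x : X // Γ.typ x ∈ J} J where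
  inc p q := Γ.inc p.1 q.1
  typ p := ⟨Γ.typ p.1, p.2⟩
  inc_refl p := Γ.inc_refl p.1
  inc_symm p q h := Γ.inc_symm _ _ h
  eq_of_inc_of_typ_eq p q h ht :=
    Subtype.ext (Γ.eq_of_inc_of_typ_eq _ _ h (congrArg Subtype.val ht))

end IncidenceSystem

section CosetGeometry

variable {G : Type*} [Group G] {ι : Type*}

/-- The right coset `H g`. -/
def rcoset (H : Subgroup G) (g : G) : Set G := {x : G | x * g⁻¹ ∈ H}

lemma mem_rcoset_self (H : Subgroup G) (g : G) : g ∈ rcoset H g := by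
  show g * g⁻¹ ∈ H
  simp only [mul_inv_cancel]
  exact H.one_mem

lemma rcoset_eq_of_mem {H : Subgroup G} {g x : G} (hx : x ∈ rcoset H g) :
    rcoset H x = rcoset H g := by
  ext y
  simp only [rcoset, Set.mem_setOf_eq] at *
  constructor
  · intro hy
    have h2 := H.mul_mem hy hx
    have h3 : y * x⁻¹ * (x * g⁻¹) = y * g⁻¹ := by group
    rwa [h3] at h2
  · intro hy
    have h2 := H.mul_mem hy (H.inv_mem hx)
    have h3 : y * g⁻¹ * (x * g⁻¹)⁻¹ = y * x⁻¹ := by group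
    rwa [h3] at h2

/-- Elements of the coset geometry `Γ(G; (G_i))`: pairs consisting of a type
`i` and a right coset of `G_i`. -/
def CosetElt (Gi : ι → Subgroup G) : Type _ :=
  { p : ι × Set G // ∃ g : G, p.2 = rcoset (Gi p.1) g }

/-- The coset incidence system `Γ(G; (G_i))` of Tits. -/
def cosetGeometry (Gi : ι → Subgroup G) : IncidenceSystem (CosetElt Gi) ι where
  inc p q := (p.1.2 ∩ q.1.2).Nonempty
  typ p := p.1.1
  inc_refl := by
    rintro ⟨⟨i, S⟩, g, hg⟩
    dsimp at hg ⊢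
    subst hg
    exact ⟨g, mem_rcoset_self _ g, mem_rcoset_self _ g⟩
  inc_symm := by
    rintro p q ⟨x, hx1, hx2⟩
    exact ⟨x, hx2, hx1⟩
  eq_of_inc_of_typ_eq := by
    rintro ⟨⟨i, S⟩, hS⟩ ⟨⟨j, T⟩, hT⟩ hinc hij
    obtain ⟨x, hx1, hx2⟩ := hinc
    dsimp at hij hx1 hx2 hS hT
    subst hij
    obtain ⟨g, rfl⟩ := hS
    obtain ⟨h, rfl⟩ := hT
    apply Subtype.ext
    dsimp only
    rw [Prod.mk.injEq]
    exact ⟨rfl, by rw [← rcoset_eq_of_mem hx1, rcoset_eq_of_mem hx2]⟩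

lemma rcoset_image_mul (H : Subgroup G) (g a : G) :
    (fun x : G => x * a) '' rcoset H g = rcoset H (g * a) := by
  ext y
  simp only [rcoset, Set.mem_image, Set.mem_setOf_eq, mul_inv_rev]
  constructor
  · rintro ⟨x, hx, rfl⟩
    have h3 : x * a * (a⁻¹ * g⁻¹) = x * g⁻¹ := by group
    rwa [h3]
  · intro hy
    refine ⟨y * a⁻¹, ?_, by group⟩
    have h3 : y * a⁻¹ * g⁻¹ = y * (a⁻¹ * g⁻¹) := by group
    rwa [h3]

/-- Right multiplication by `a` on the coset geometry. -/
def rmul (Gi : ι → Subgroup G) (a : G) (p : CosetElt Gi) : CosetElt Gi :=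
  ⟨(p.1.1, (fun x : G => x * a) '' p.1.2), by
    obtain ⟨g, hg⟩ := p.2
    exact ⟨g * a, by rw [hg, rcoset_image_mul]⟩⟩

/-- `G` acts flag-transitively on the coset geometry by right multiplication. -/
def GFlagTransitive (Gi : ι → Subgroup G) : Prop :=
  ∀ F F' : Set (CosetElt Gi), (cosetGeometry Gi).IsFlag F → (cosetGeometry Gi).IsFlag F' →
    (cosetGeometry Gi).typ '' F = (cosetGeometry Gi).typ '' F' →
    ∃ a : G, rmul Gi a '' F = F'

/-- Only the identity of `G` fixes a chamber of the coset geometry. -/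
def GFree (Gi : ι → Subgroup G) : Prop :=
  ∀ (a : G) (C : Set (CosetElt Gi)), (cosetGeometry Gi).IsChamber C →
    rmul Gi a '' C = C → a = 1

end CosetGeometry

/-- `(G, ρ)` is a C-group: the `ρ i` are involutions generating `G` and
satisfying the intersection property. -/
def IsCGroup {G : Type*} [Group G] {r : ℕ} (ρ : Fin r → G) : Prop :=
  (∀ i, ρ i ≠ 1 ∧ ρ i * ρ i = 1) ∧
  Subgroup.closure (Set.range ρ) = ⊤ ∧
  ∀ K J : Set (Fin r),
    Subgroup.closure (ρ '' K) ⊓ Subgroup.closure (ρ '' J) =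
      Subgroup.closure (ρ '' (K ∩ J))

/-- The parabolic subgroup `G⁺_K = ⟨α_i⁻¹ α_j : i, j ∈ K⟩` of a `C⁺`-group. -/
def GplusSub {G : Type*} [Group G] {r : ℕ} (α : Fin r → G) (K : Set (Fin r)) : Subgroup G :=
  Subgroup.closure {g : G | ∃ i ∈ K, ∃ j ∈ K, g = (α i)⁻¹ * α j}
namespace Hypertope
open IncidenceSystem
variable {X : Type*} {I : Type*} (Γ : IncidenceSystem X I)

/-- Elements of the residue of a flag have a type not occurring in the flag. -/
lemma typ_not_mem_res {F : Set X} {x : X} (hx : x ∈ Γ.res F) : Γ.typ x ∉ Γ.typ '' F := by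
  rintro ⟨f, hfF, hft⟩
  exact hx.1 (Γ.eq_of_inc_of_typ_eq x f (hx.2 f hfF) hft.symm ▸ hfF)

lemma flag_insert_of_mem_res {F : Set X} (hF : Γ.IsFlag F) {x : X} (hx : x ∈ Γ.res F) :
    Γ.IsFlag (insert x F) := by
  intro a ha b hb
  rcases Set.mem_insert_iff.mp ha with h1 | h1 <;>
    rcases Set.mem_insert_iff.mp hb with h2 | h2
  · rw [h1, h2]; exact Γ.inc_refl x
  · rw [h1]; exact hx.2 b h2
  · rw [h2]; exact Γ.inc_symm _ _ (hx.2 a h1)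
  · exact hF a h1 b h2

lemma corank_insert_lt [Finite I] {F : Set X} {x : X} (hx : Γ.typ x ∉ Γ.typ '' F) :
    ((Γ.typ '' (insert x F))ᶜ).ncard < ((Γ.typ '' F)ᶜ).ncard := by
  have hfin : ((Γ.typ '' F)ᶜ).Finite := Set.toFinite _
  have h1 : Γ.typ '' (insert x F) = insert (Γ.typ x) (Γ.typ '' F) := Set.image_insert_eq
  rw [h1]
  have h2 : (insert (Γ.typ x) (Γ.typ '' F))ᶜ ⊂ (Γ.typ '' F)ᶜ := by
    constructor
    · intro a ha
      simp only [Set.mem_compl_iff, Set.mem_insert_iff, not_or] at ha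
      exact ha.2
    · intro hsub
      have := hsub (Set.mem_compl hx)
      simp at this
  exact Set.ncard_lt_ncard h2 hfin

/-- Key lemma: a residually connected geometry is strongly chamber connected. -/
theorem chamberConnectedFrom [Finite I] (hgeo : Γ.IsGeometry) (hrc : Γ.ResiduallyConnected)
    {F : Set X} (hF : Γ.IsFlag F) : Γ.ChamberConnectedFrom F := by
  generalize hn : ((Γ.typ '' F)ᶜ).ncard = n
  induction n using Nat.strong_induction_on generalizing F with
  | _ n IH =>
  intro C C' hC hC' hFC hFC'
  set R := fun A B : Set X => F ⊆ A ∧ F ⊆ B ∧ ∃ i : I, Γ.Adjacent A B i with hR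
  -- if a chamber contains F and an element whose type occurs in F, that element is in F
  have hmemF : ∀ D : Set X, Γ.IsChamber D → F ⊆ D → ∀ x ∈ D, Γ.typ x ∈ Γ.typ '' F → x ∈ F := by
    rintro D hD hFD x hxD ⟨f, hfF, hft⟩
    exact Γ.eq_of_inc_of_typ_eq x f (hD.1 x hxD f (hFD hfF)) hft.symm ▸ hfF
  rcases Nat.lt_or_ge n 2 with h2 | h2
  · by_cases hCC' : C = C'
    · subst hCC'; exact Relation.ReflTransGen.refl
    · -- corank 0 is impossible; corank 1: single adjacency step
      rcases Nat.lt_or_ge n 1 with h1 | h1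
      · -- n = 0 : C = F = C'
        exfalso
        have hn0 : ((Γ.typ '' F)ᶜ).ncard = 0 := by omega
        have hcompl : (Γ.typ '' F)ᶜ = ∅ := (Set.ncard_eq_zero (Set.toFinite _)).mp hn0
        have huniv : Γ.typ '' F = Set.univ := by
          rw [← compl_compl (Γ.typ '' F), hcompl, Set.compl_empty]
        have hCF : ∀ D : Set X, Γ.IsChamber D → F ⊆ D → D = F := fun D hD hFD =>
          Set.Subset.antisymm
            (fun x hx => hmemF D hD hFD x hx (huniv ▸ Set.mem_univ _)) hFD
        exact hCC' ((hCF C hC hFC).trans (hCF C' hC' hFC').symm)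
      · have h1 : n = 1 := by omega
        subst h1
        obtain ⟨i, hi⟩ := Set.ncard_eq_one.mp hn
        have hiF : i ∉ Γ.typ '' F := by
          have : i ∈ (Γ.typ '' F)ᶜ := hi ▸ rfl
          exact this
        refine Relation.ReflTransGen.single ⟨hFC, hFC', i, hC, hC', hCC', ?_⟩
        have key : ∀ D : Set X, Γ.IsChamber D → F ⊆ D → {x ∈ D | Γ.typ x ≠ i} = F := by
          intro D hD hFD
          ext x
          constructor
          · rintro ⟨hxD, hxi⟩
            apply hmemF D hD hFD x hxD
            have : Γ.typ x ∈ ((Γ.typ '' F)ᶜ)ᶜ := by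
              rw [hi]; simpa using hxi
            simpa using this
          · intro hxF
            exact ⟨hFD hxF, fun h => hiF (h ▸ ⟨x, hxF, rfl⟩)⟩
        rw [key C hC hFC, key C' hC' hFC']
  · -- corank ≥ 2 : use residual connectedness
    obtain ⟨i, j, hi', hj', hij⟩ := (Set.one_lt_ncard_iff (Set.toFinite _)).mp (hn ▸ h2)
    have hi : i ∉ Γ.typ '' F := hi'
    have hj : j ∉ Γ.typ '' F := hj'
    have hconn := hrc F hF ⟨i, j, hij, hi, hj⟩
    -- pick x ∈ C of type i, x' ∈ C' of type i
    have hpick : ∀ D : Set X, Γ.IsChamber D → F ⊆ D → ∃ x ∈ D, x ∈ Γ.res F ∧ Γ.typ x = i := by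
      intro D hD hFD
      have : i ∈ Γ.typ '' D := hD.2 ▸ Set.mem_univ i
      obtain ⟨x, hxD, hxt⟩ := this
      refine ⟨x, hxD, ⟨fun hxF => hi ⟨x, hxF, hxt⟩, fun f hf => hD.1 x hxD f (hFD hf)⟩, hxt⟩
    obtain ⟨x, hxC, hxres, -⟩ := hpick C hC hFC
    obtain ⟨x', hx'C', hx'res, -⟩ := hpick C' hC' hFC'
    have hpath := hconn.2 x hxres x' hx'res
    -- reduction to smaller corank
    have step : ∀ z, z ∈ Γ.res F → ∀ D E : Set X, Γ.IsChamber D → Γ.IsChamber E →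
        insert z F ⊆ D → insert z F ⊆ E → Relation.ReflTransGen R D E := by
      intro z hz D E hD hE hzD hzE
      have hflag := flag_insert_of_mem_res Γ hF hz
      have hlt := corank_insert_lt Γ (F := F) (typ_not_mem_res Γ hz)
      have := IH _ (hn ▸ hlt) hflag rfl D E hD hE hzD hzE
      refine Relation.ReflTransGen.mono ?_ _ _ this
      rintro A B ⟨hA, hB, hadj⟩
      exact ⟨(Set.subset_insert z F).trans hA, (Set.subset_insert z F).trans hB, hadj⟩
    -- walk along the path
    have main : ∀ z, Relation.ReflTransGen
        (fun a b : X => a ∈ Γ.res F ∧ b ∈ Γ.res F ∧ a ≠ b ∧ Γ.inc a b) x z →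
        ∀ D : Set X, Γ.IsChamber D → insert z F ⊆ D → Relation.ReflTransGen R C D := by
      intro z hzpath
      induction hzpath with
      | refl => exact fun D hD hzD => step x hxres C D hC hD (Set.insert_subset hxC hFC) hzD
      | tail hab e ihab =>
        rename_i b c
        intro D hD hcD
        -- find a chamber containing F ∪ {b, c}
        have hcflag : Γ.IsFlag (insert c F) := flag_insert_of_mem_res Γ hF e.2.1
        have hbres : b ∈ Γ.res (insert c F) := by
          refine ⟨fun h => ?_, fun f hf => ?_⟩
          · rcases Set.mem_insert_iff.mp h with h' | h'
            · exact e.2.2.1 h'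
            · exact e.1.1 h'
          · rcases Set.mem_insert_iff.mp hf with h' | h'
            · rw [h']; exact e.2.2.2
            · exact e.1.2 f h'
        have hflag2 : Γ.IsFlag (insert b (insert c F)) :=
          flag_insert_of_mem_res Γ hcflag hbres
        obtain ⟨Ec, hEc, hsub⟩ := hgeo _ hflag2
        have h1 : Relation.ReflTransGen R C Ec := by
          apply ihab Ec hEc
          intro p hp
          rcases hp with rfl | hp
          · exact hsub (Set.mem_insert _ _)
          · exact hsub (Set.mem_insert_of_mem _ (Set.mem_insert_of_mem _ hp))
        have h2 : Relation.ReflTransGen R Ec D := by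
          apply step c e.2.1 Ec D hEc hD ?_ hcD
          intro p hp
          rcases hp with rfl | hp
          · exact hsub (Set.mem_insert_of_mem _ (Set.mem_insert _ _))
          · exact hsub (Set.mem_insert_of_mem _ (Set.mem_insert_of_mem _ hp))
        exact h1.trans h2
    exact main x' hpath C' hC' (Set.insert_subset hx'C' hFC')


section Coset
open IncidenceSystem
variable {G : Type*} [Group G] {r : ℕ} (Gi : Fin r → Subgroup G)

/-- The element of the coset geometry given by the coset `Gi i · g`. -/
def elt (i : Fin r) (g : G) : CosetElt Gi := ⟨(i, rcoset (Gi i) g), g, rfl⟩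

lemma rcoset_eq_iff {H : Subgroup G} {g h : G} : rcoset H g = rcoset H h ↔ h * g⁻¹ ∈ H := by
  constructor
  · intro he
    have : h ∈ rcoset H g := he ▸ mem_rcoset_self H h
    exact this
  · intro hm
    exact (rcoset_eq_of_mem (show h ∈ rcoset H g from hm)).symm

lemma elt_eq_iff {i : Fin r} {g h : G} : elt Gi i g = elt Gi i h ↔ h * g⁻¹ ∈ Gi i := by
  constructor
  · intro he
    have : rcoset (Gi i) g = rcoset (Gi i) h := by
      have := congrArg (fun p : CosetElt Gi => p.1.2) he
      exact this
    exact rcoset_eq_iff.mp this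
  · intro hm
    apply Subtype.ext
    exact Prod.ext rfl (rcoset_eq_iff.mpr hm)

lemma typ_elt (i : Fin r) (g : G) : (cosetGeometry Gi).typ (elt Gi i g) = i := rfl

lemma elt_eq_elt_typ {i j : Fin r} {g h : G} (he : elt Gi i g = elt Gi j h) : i = j := by
  have := congrArg (fun p : CosetElt Gi => p.1.1) he
  exact this

lemma rmul_elt (a : G) (i : Fin r) (g : G) :
    rmul Gi a (elt Gi i g) = elt Gi i (g * a) := by
  apply Subtype.ext
  exact Prod.ext rfl (rcoset_image_mul (Gi i) g a)

lemma exists_elt (p : CosetElt Gi) : ∃ i g, p = elt Gi i g := by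
  obtain ⟨⟨i, S⟩, g, hg⟩ := p
  exact ⟨i, g, Subtype.ext (Prod.ext rfl hg)⟩

lemma inc_elt_of_mem {i j : Fin r} {g h x : G} (h1 : x * g⁻¹ ∈ Gi i) (h2 : x * h⁻¹ ∈ Gi j) :
    (cosetGeometry Gi).inc (elt Gi i g) (elt Gi j h) := ⟨x, h1, h2⟩

/-- The chamber `{Gi i · g : i}`. -/
def Cg (g : G) : Set (CosetElt Gi) := Set.range (fun i => elt Gi i g)

lemma typ_image_Cg (g : G) : (cosetGeometry Gi).typ '' Cg Gi g = Set.univ := by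
  ext i
  simp only [Set.mem_univ, iff_true, Set.mem_image]
  exact ⟨elt Gi i g, ⟨i, rfl⟩, rfl⟩

lemma Cg_chamber (g : G) : (cosetGeometry Gi).IsChamber (Cg Gi g) := by
  constructor
  · rintro p ⟨i, rfl⟩ q ⟨j, rfl⟩
    exact inc_elt_of_mem Gi (x := g) (by simpa using (Gi i).one_mem)
      (by simpa using (Gi j).one_mem)
  · exact typ_image_Cg Gi g

lemma rmul_image_Cg (a g : G) : rmul Gi a '' Cg Gi g = Cg Gi (g * a) := by
  ext p
  constructor
  · rintro ⟨q, ⟨i, rfl⟩, rfl⟩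
    exact ⟨i, (rmul_elt Gi a i g).symm⟩
  · rintro ⟨i, rfl⟩
    exact ⟨elt Gi i g, ⟨i, rfl⟩, rmul_elt Gi a i g⟩

lemma mem_Cg {p : CosetElt Gi} {g : G} (hp : p ∈ Cg Gi g) : ∃ i, p = elt Gi i g := by
  obtain ⟨i, rfl⟩ := hp
  exact ⟨i, rfl⟩

variable {Gi}

/-- Freeness: an element of all the `Gi` is trivial. -/
lemma triv (hfree : GFree Gi) {b : G} (hb : ∀ j, b ∈ Gi j) : b = 1 := by
  apply hfree b (Cg Gi 1) (Cg_chamber Gi 1)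
  rw [rmul_image_Cg, one_mul]
  have : (fun i => elt Gi i b) = fun i => elt Gi i 1 :=
    funext fun i => (elt_eq_iff Gi).mpr (by simpa using (Gi i).inv_mem (hb i))
  unfold Cg
  rw [this]

lemma Cg_inj (hfree : GFree Gi) {g h : G} (he : Cg Gi g = Cg Gi h) : g = h := by
  have key : ∀ i, h * g⁻¹ ∈ Gi i := by
    intro i
    have : elt Gi i g ∈ Cg Gi h := he ▸ ⟨i, rfl⟩
    obtain ⟨j, hj⟩ := mem_Cg Gi this
    have hij : i = j := elt_eq_elt_typ Gi hj
    subst hij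
    exact (elt_eq_iff Gi).mp hj
  have h1 := triv hfree key
  exact (mul_inv_eq_one.mp h1).symm

lemma chamber_eq_Cg (hft : GFlagTransitive Gi) {C : Set (CosetElt Gi)}
    (hC : (cosetGeometry Gi).IsChamber C) : ∃ g, C = Cg Gi g := by
  obtain ⟨a, ha⟩ := hft (Cg Gi 1) C (Cg_chamber Gi 1).1 hC.1
    (by rw [typ_image_Cg, hC.2])
  refine ⟨a, ?_⟩
  rw [← ha, rmul_image_Cg, one_mul]

/-- The flag of the base chamber with types outside `K`. -/
def FK (Gi : Fin r → Subgroup G) (K : Set (Fin r)) : Set (CosetElt Gi) :=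
  {p | ∃ j ∉ K, p = elt Gi j 1}

lemma FK_flag (K : Set (Fin r)) : (cosetGeometry Gi).IsFlag (FK Gi K) := by
  rintro p ⟨i, hi, rfl⟩ q ⟨j, hj, rfl⟩
  exact inc_elt_of_mem Gi (x := 1) (by simpa using (Gi i).one_mem)
    (by simpa using (Gi j).one_mem)

lemma FK_subset_Cg {K : Set (Fin r)} {g : G} (hg : ∀ j ∉ K, g ∈ Gi j) :
    FK Gi K ⊆ Cg Gi g := by
  rintro p ⟨j, hj, rfl⟩
  have : elt Gi j 1 = elt Gi j g := (elt_eq_iff Gi).mpr (by simpa using hg j hj)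
  rw [this]
  exact ⟨j, rfl⟩

lemma mem_Gi_of_FK_subset_Cg (hfree : GFree Gi) {K : Set (Fin r)} {g : G}
    (hsub : FK Gi K ⊆ Cg Gi g) : ∀ j ∉ K, g ∈ Gi j := by
  intro j hj
  have : elt Gi j 1 ∈ Cg Gi g := hsub ⟨j, hj, rfl⟩
  obtain ⟨k, hk⟩ := mem_Cg Gi this
  have hjk : j = k := elt_eq_elt_typ Gi hk
  subst hjk
  have := (elt_eq_iff Gi).mp hk.symm
  simpa using (Gi j).inv_mem this

/-- Existence of the distinguished involution `ρ i`. -/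
lemma exists_rho (hthin : (cosetGeometry Gi).Thin) (hft : GFlagTransitive Gi)
    (hfree : GFree Gi) (i : Fin r) :
    ∃ a : G, (∀ j, j ≠ i → a ∈ Gi j) ∧ a ∉ Gi i ∧ a * a = 1 ∧
      ∀ h : G, (∀ j, j ≠ i → h ∈ Gi j) → h = 1 ∨ h = a := by
  set F := FK Gi {i} with hF
  have hFflag : (cosetGeometry Gi).IsFlag F := FK_flag {i}
  have htypF : (cosetGeometry Gi).typ '' F = {i}ᶜ := by
    ext j
    constructor
    · rintro ⟨p, ⟨k, hk, rfl⟩, rfl⟩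
      exact hk
    · intro hj
      exact ⟨elt Gi j 1, ⟨j, by simpa using hj, rfl⟩, rfl⟩
  -- the base element of type i lies in the residue of F
  have hmemres : ∀ g : G, (∀ j, j ≠ i → g ∈ Gi j) →
      elt Gi i g ∈ (cosetGeometry Gi).res F := by
    intro g hg
    constructor
    · rintro ⟨k, hk, he⟩
      exact (by simpa using hk : k ≠ i) (elt_eq_elt_typ Gi he).symm
    · rintro f ⟨k, hk, rfl⟩
      exact inc_elt_of_mem Gi (x := g) (by simpa using (Gi i).one_mem)
        (by simpa using hg k (by simpa using hk))
  have h1res : elt Gi i 1 ∈ (cosetGeometry Gi).res F := hmemres 1 (fun j _ => (Gi j).one_mem)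
  obtain ⟨x, y, hxy, hres⟩ := hthin F hFflag (by
    refine ⟨i, by simp [htypF], ?_⟩
    intro j hj
    rw [htypF] at hj
    simpa using hj)
  -- let y' be the element of the residue distinct from elt i 1
  have hpair : ∃ y' : CosetElt Gi, y' ≠ elt Gi i 1 ∧
      (cosetGeometry Gi).res F = {elt Gi i 1, y'} := by
    have h1 : elt Gi i 1 ∈ ({x, y} : Set (CosetElt Gi)) := hres ▸ h1res
    rcases h1 with h1 | h1
    · exact ⟨y, fun h => hxy (h1.symm.trans h.symm), by rw [hres, h1]⟩
    · refine ⟨x, fun h => hxy (h.trans h1), by rw [hres, h1, Set.pair_comm]⟩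
  obtain ⟨y', hy'ne, hres2⟩ := hpair
  -- y' has type i
  have hy'res : y' ∈ (cosetGeometry Gi).res F := hres2 ▸ Set.mem_insert_of_mem _ rfl
  have hy'typ : (cosetGeometry Gi).typ y' = i := by
    have := typ_not_mem_res (cosetGeometry Gi) hy'res
    rw [htypF] at this
    simpa using this
  obtain ⟨k, c, rfl⟩ := exists_elt Gi y'
  have hki : k = i := hy'typ
  subst hki
  -- the chamber F ∪ {y'}
  have hC' : (cosetGeometry Gi).IsChamber (insert (elt Gi k c) F) := by
    constructor
    · exact flag_insert_of_mem_res (cosetGeometry Gi) hFflag hy'res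
    · rw [Set.image_insert_eq, htypF]
      ext j
      simp only [Set.mem_insert_iff, Set.mem_compl_iff, Set.mem_singleton_iff, Set.mem_univ,
        iff_true]
      by_cases h : j = k
      · left; rw [h]; rfl
      · right; exact h
  obtain ⟨a, ha⟩ := chamber_eq_Cg hft hC'
  -- a fixes F, so a ∈ Gi j for j ≠ i
  have haGj : ∀ j, j ≠ k → a ∈ Gi j := by
    have hsub : FK Gi {k} ⊆ Cg Gi a := by
      rw [← ha]
      exact fun p hp => Set.mem_insert_of_mem _ hp
    intro j hj
    exact mem_Gi_of_FK_subset_Cg hfree hsub j (by simpa using hj)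
  -- elt k a = y'
  have helt : elt Gi k a = elt Gi k c := by
    have hmem : elt Gi k a ∈ insert (elt Gi k c) F := by
      rw [ha]; exact ⟨k, rfl⟩
    rcases Set.mem_insert_iff.mp hmem with h | h
    · exact h
    · exfalso
      obtain ⟨j, hj, hje⟩ := h
      exact (by simpa using hj : j ≠ k) (elt_eq_elt_typ Gi hje).symm
  have hay' : elt Gi k a = (⟨(k, rcoset (Gi k) c), c, rfl⟩ : CosetElt Gi) := helt
  -- a ∉ Gi k
  have hanotin : a ∉ Gi k := by
    intro hmem
    apply hy'ne
    rw [← helt]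
    exact ((elt_eq_iff Gi).mpr (by simpa using (Gi k).inv_mem hmem)).symm
  -- a * a = 1
  have hres_cases : ∀ h : G, (∀ j, j ≠ k → h ∈ Gi j) →
      elt Gi k h = elt Gi k 1 ∨ elt Gi k h = elt Gi k a := by
    intro h hh
    have : elt Gi k h ∈ ({elt Gi k 1, elt Gi k c} : Set (CosetElt Gi)) :=
      hres2 ▸ hmemres h hh
    rcases this with h' | h'
    · exact Or.inl h'
    · exact Or.inr (by rw [helt]; exact h')
  have hclass : ∀ h : G, (∀ j, j ≠ k → h ∈ Gi j) → h = 1 ∨ h = a := by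
    intro h hh
    rcases hres_cases h hh with h' | h'
    · left
      have h1 : h ∈ Gi k := by simpa using (elt_eq_iff Gi).mp h'.symm
      exact triv hfree (fun j => by
        by_cases hj : j = k
        · rw [hj]; exact h1
        · exact hh j hj)
    · right
      have h1 : h * a⁻¹ ∈ Gi k := (elt_eq_iff Gi).mp h'.symm
      have h2 : ∀ j, h * a⁻¹ ∈ Gi j := by
        intro j
        by_cases hj : j = k
        · rw [hj]; exact h1
        · exact (Gi j).mul_mem (hh j hj) ((Gi j).inv_mem (haGj j hj))
      have h3 := triv hfree h2
      have : h = a := by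
        have : h * a⁻¹ * a = 1 * a := by rw [h3]
        simpa using this
      exact this
  have hsq : a * a = 1 := by
    have haa : ∀ j, j ≠ k → a * a ∈ Gi j := fun j hj => (Gi j).mul_mem (haGj j hj) (haGj j hj)
    rcases hclass (a * a) haa with h' | h'
    · exact h'
    · exfalso
      apply hanotin
      have : a * a * a⁻¹ = a * a⁻¹ := by rw [h']
      have h1 : a * a * a⁻¹ = a := by group
      rw [h1] at this
      rw [this]
      simpa using (Gi k).one_mem
  exact ⟨a, haGj, hanotin, hsq, hclass⟩

/-- The key identification of parabolic subgroups with the groups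
generated by the corresponding involutions. -/
lemma closure_eq (hgeo : (cosetGeometry Gi).IsGeometry)
    (hrc : (cosetGeometry Gi).ResiduallyConnected)
    (hft : GFlagTransitive Gi) (hfree : GFree Gi)
    (ρ : Fin r → G)
    (hρ1 : ∀ i, ∀ j, j ≠ i → ρ i ∈ Gi j)
    (hρ2 : ∀ i, ρ i ∉ Gi i)
    (hρ4 : ∀ i, ∀ h : G, (∀ j, j ≠ i → h ∈ Gi j) → h = 1 ∨ h = ρ i)
    (K : Set (Fin r)) :
    Subgroup.closure (ρ '' K) = ⨅ j ∈ (Kᶜ : Set (Fin r)), Gi j := by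
  apply le_antisymm
  · rw [Subgroup.closure_le]
    rintro g ⟨i, hiK, rfl⟩
    simp only [SetLike.mem_coe, Subgroup.mem_iInf]
    intro j hj
    exact hρ1 i j (fun h => hj (h ▸ hiK))
  · intro g hg
    simp only [Subgroup.mem_iInf] at hg
    -- chambers Cg 1 and Cg g both contain FK K
    have hcc := chamberConnectedFrom (cosetGeometry Gi) hgeo hrc (FK_flag (Gi := Gi) K)
    have hchain := hcc (Cg Gi 1) (Cg Gi g) (Cg_chamber Gi 1) (Cg_chamber Gi g)
      (FK_subset_Cg (fun j _ => (Gi j).one_mem)) (FK_subset_Cg hg)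
    -- walk the chain, keeping track of the group element
    have inv : ∀ D, Relation.ReflTransGen
        (fun A B => FK Gi K ⊆ A ∧ FK Gi K ⊆ B ∧
          ∃ i, (cosetGeometry Gi).Adjacent A B i) (Cg Gi 1) D →
        ∃ h ∈ Subgroup.closure (ρ '' K), D = Cg Gi h := by
      intro D hD
      induction hD with
      | refl => exact ⟨1, Subgroup.one_mem _, rfl⟩
      | tail hAB e ih =>
        rename_i B D'
        obtain ⟨h, hh, rfl⟩ := ih
        obtain ⟨hFB, hFD, i, hadj⟩ := e
        obtain ⟨hBch, hDch, hne, hsets⟩ := hadj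
        obtain ⟨h', rfl⟩ := chamber_eq_Cg hft hDch
        -- h' * h⁻¹ ∈ Gi j for all j ≠ i
        have hb : ∀ j, j ≠ i → h' * h⁻¹ ∈ Gi j := by
          intro j hj
          have hmem : elt Gi j h ∈ {x ∈ Cg Gi h | (cosetGeometry Gi).typ x ≠ i} :=
            ⟨⟨j, rfl⟩, hj⟩
          rw [hsets] at hmem
          obtain ⟨k, hk⟩ := mem_Cg Gi hmem.1
          have hjk : j = k := elt_eq_elt_typ Gi hk
          subst hjk
          exact (elt_eq_iff Gi).mp hk
        rcases hρ4 i (h' * h⁻¹) hb with h1 | h1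
        · exact absurd (by rw [mul_inv_eq_one.mp h1]) hne
        · -- i must be in K
          have hiK : i ∈ K := by
            by_contra hiK
            apply hρ2 i
            rw [← h1]
            have hhi : h ∈ Gi i := mem_Gi_of_FK_subset_Cg hfree hFB i hiK
            have hh'i : h' ∈ Gi i := mem_Gi_of_FK_subset_Cg hfree hFD i hiK
            exact (Gi i).mul_mem hh'i ((Gi i).inv_mem hhi)
          refine ⟨ρ i * h, Subgroup.mul_mem _
            (Subgroup.subset_closure ⟨i, hiK, rfl⟩) hh, ?_⟩
          have h2 : h' * h⁻¹ * h = h' := by group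
          rw [← h1, h2]
    obtain ⟨h, hh, he⟩ := inv (Cg Gi g) hchain
    rwa [Cg_inj hfree he]

end Coset

end Hypertope

/-- Theorem 4.1: the distinguished generators of a regular hypertope form a C-group. -/
theorem stmt_0 {G : Type*} [Group G] {r : ℕ} (Gi : Fin r → Subgroup G)
    (hgeo : (cosetGeometry Gi).IsGeometry)
    (hthin : (cosetGeometry Gi).Thin)
    (hrc : (cosetGeometry Gi).ResiduallyConnected)
    (hft : GFlagTransitive Gi)
    (hfree : GFree Gi) :
    ∃ ρ : Fin r → G,
      (∀ i, ρ i ≠ 1 ∧ ρ i * ρ i = 1) ∧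
      (∀ i : Fin r, (⨅ j ∈ ({i}ᶜ : Set (Fin r)), Gi j) = Subgroup.closure {ρ i}) ∧
      Subgroup.closure (Set.range ρ) = ⊤ ∧
      (∀ K J : Set (Fin r),
        Subgroup.closure (ρ '' K) ⊓ Subgroup.closure (ρ '' J) =
          Subgroup.closure (ρ '' (K ∩ J))) := by
  classical
  choose ρ hρ1 hρ2 hρ3 hρ4 using fun i => Hypertope.exists_rho hthin hft hfree i
  have hkey := Hypertope.closure_eq hgeo hrc hft hfree ρ hρ1 hρ2 hρ4
  refine ⟨ρ, ?_, ?_, ?_, ?_⟩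
  · intro i
    exact ⟨fun h => hρ2 i (by rw [h]; exact (Gi i).one_mem), hρ3 i⟩
  · intro i
    rw [← hkey {i}, Set.image_singleton]
  · rw [← Set.image_univ, hkey Set.univ]
    simp
  · intro K J
    rw [hkey, hkey, hkey, Set.compl_inter, iInf_union]
end

section
/- Let I = {0,...,r−1} with r ≥ 3 and let Γ be a chiral hypertope of rank r, i.e. a thin, residually connected incidence geometry over I such that the group G⁺ = Aut_I(Γ) of type-preserving automorphisms has exactly two orbits on chambers with any two adjacent chambers lying in distinct orbits. Let C be a chamber of Γ, for each j ∈ I let C^j denote the unique chamber j-adjacent to C, and for i = 1,...,r−1 let α_i ∈ G⁺ be an automorphism mapping C to (C^0)^i. Then, setting α_0 = 1 and G⁺_K = ⟨α_i^{-1}α_j : i, j ∈ K⟩ for K ⊆ {0,...,r−1}, the set R = {α_1,...,α_{r−1}} generates G⁺ and (G⁺, R) satisfies the intersection property IP⁺: for all K, J ⊆ {0,...,r−1} with |K|, |J| ≥ 2, G⁺_K ∩ G⁺_J = G⁺_{K∩J}; that is, (G⁺, R) is a C⁺-group. -/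
open Pointwise

section Aux

namespace IncidenceSystem

variable {X : Type*} {r : ℕ} {Γ : IncidenceSystem X (Fin r)}

lemma isFlag_subset {Cc F : Set X} (hC : Γ.IsFlag Cc) (h : F ⊆ Cc) : Γ.IsFlag F :=
  fun x hx y hy => hC x (h hx) y (h hy)

lemma chamber_typ_surj {A : Set X} (h : Γ.IsChamber A) (i : Fin r) :
    ∃ x ∈ A, Γ.typ x = i := by
  have hi : i ∈ Γ.typ '' A := by rw [h.2]; trivial
  obtain ⟨x, hx, hxe⟩ := hi
  exact ⟨x, hx, hxe⟩

lemma chamber_typ_inj {A : Set X} (h : Γ.IsChamber A) {x y : X} (hx : x ∈ A) (hy : y ∈ A)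
    (ht : Γ.typ x = Γ.typ y) : x = y :=
  Γ.eq_of_inc_of_typ_eq x y (h.1 x hx y hy) ht

lemma chamber_eq_of_subset {A B : Set X} (hA : Γ.IsChamber A) (hB : Γ.IsChamber B)
    (h : A ⊆ B) : A = B := by
  refine Set.Subset.antisymm h fun b hb => ?_
  obtain ⟨a, ha, hae⟩ := chamber_typ_surj hA (Γ.typ b)
  rw [chamber_typ_inj hB hb (h ha) hae.symm]
  exact ha

lemma aut_typ {g : Equiv.Perm X} (hg : g ∈ Γ.autGroup) (x : X) : Γ.typ (g x) = Γ.typ x :=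
  hg.1 x

lemma aut_inc {g : Equiv.Perm X} (hg : g ∈ Γ.autGroup) (x y : X) :
    Γ.inc (g x) (g y) ↔ Γ.inc x y := hg.2 x y

lemma aut_image_flag {g : Equiv.Perm X} (hg : g ∈ Γ.autGroup) {A : Set X} (hA : Γ.IsFlag A) :
    Γ.IsFlag (⇑g '' A) := by
  rintro _ ⟨a, ha, rfl⟩ _ ⟨b, hb, rfl⟩
  exact (aut_inc hg a b).mpr (hA a ha b hb)

lemma aut_image_chamber {g : Equiv.Perm X} (hg : g ∈ Γ.autGroup) {A : Set X}
    (hA : Γ.IsChamber A) : Γ.IsChamber (⇑g '' A) := by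
  refine ⟨aut_image_flag hg hA.1, ?_⟩
  rw [← hA.2]
  ext i
  simp only [Set.mem_image]
  constructor
  · rintro ⟨_, ⟨a, ha, rfl⟩, rfl⟩
    exact ⟨a, ha, (aut_typ hg a).symm ▸ rfl⟩
  · rintro ⟨a, ha, rfl⟩
    exact ⟨g a, ⟨a, ha, rfl⟩, aut_typ hg a⟩

lemma aut_image_subflag {g : Equiv.Perm X} (hg : g ∈ Γ.autGroup) (A : Set X) (i : Fin r) :
    {x ∈ ⇑g '' A | Γ.typ x ≠ i} = ⇑g '' {x ∈ A | Γ.typ x ≠ i} := by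
  ext y
  simp only [Set.mem_setOf_eq, Set.mem_image]
  constructor
  · rintro ⟨⟨a, ha, rfl⟩, hne⟩
    exact ⟨a, ⟨ha, by rwa [aut_typ hg] at hne⟩, rfl⟩
  · rintro ⟨a, ⟨ha, hne⟩, rfl⟩
    exact ⟨⟨a, ha, rfl⟩, by rwa [aut_typ hg]⟩

lemma aut_image_adj {g : Equiv.Perm X} (hg : g ∈ Γ.autGroup) {A B : Set X} {i : Fin r}
    (h : Γ.Adjacent A B i) : Γ.Adjacent (⇑g '' A) (⇑g '' B) i := by
  refine ⟨aut_image_chamber hg h.1, aut_image_chamber hg h.2.1, ?_, ?_⟩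
  · intro he
    exact h.2.2.1 ((Set.image_injective.mpr g.injective) he)
  · rw [aut_image_subflag hg, aut_image_subflag hg, h.2.2.2]

lemma adj_symm {A B : Set X} {i : Fin r} (h : Γ.Adjacent A B i) : Γ.Adjacent B A i :=
  ⟨h.2.1, h.1, h.2.2.1.symm, h.2.2.2.symm⟩

lemma orbit_refl (A : Set X) : Γ.InSameOrbit A A :=
  ⟨1, one_mem _, by simp⟩

lemma orbit_symm {A B : Set X} (h : Γ.InSameOrbit A B) : Γ.InSameOrbit B A := by
  obtain ⟨φ, hφ, rfl⟩ := h
  refine ⟨φ⁻¹, inv_mem hφ, ?_⟩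
  rw [Set.image_image]
  simp

lemma orbit_trans {A B Cc : Set X} (h1 : Γ.InSameOrbit A B) (h2 : Γ.InSameOrbit B Cc) :
    Γ.InSameOrbit A Cc := by
  obtain ⟨φ, hφ, rfl⟩ := h1
  obtain ⟨ψ, hψ, rfl⟩ := h2
  refine ⟨ψ * φ, mul_mem hψ hφ, ?_⟩
  rw [Equiv.Perm.coe_mul, Set.image_comp]

/-- If a flag misses at most one type, two distinct chambers containing it are adjacent. -/
lemma adjacent_of_corank_le_one {F : Set X} (hF : Γ.IsFlag F)
    (hsub : ∀ i j : Fin r, i ∉ Γ.typ '' F → j ∉ Γ.typ '' F → i = j)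
    {B B' : Set X} (hB : Γ.IsChamber B) (hB' : Γ.IsChamber B')
    (hFB : F ⊆ B) (hFB' : F ⊆ B') (hne : B ≠ B') : ∃ i, Γ.Adjacent B B' i := by
  have hnss : ¬ B ⊆ B' := fun hss => hne (chamber_eq_of_subset hB hB' hss)
  obtain ⟨x, hxB, hxB'⟩ := Set.not_subset.mp hnss
  set i := Γ.typ x with hidef
  have hi : i ∉ Γ.typ '' F := by
    rintro ⟨f, hf, hfe⟩
    exact hxB' (chamber_typ_inj hB hxB (hFB hf) hfe.symm ▸ hFB' hf)
  have key : ∀ B₀ : Set X, Γ.IsChamber B₀ → F ⊆ B₀ →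
      {y ∈ B₀ | Γ.typ y ≠ i} = {y ∈ F | Γ.typ y ≠ i} := by
    intro B₀ hB₀ hFB₀
    ext y
    simp only [Set.mem_setOf_eq]
    constructor
    · rintro ⟨hyB, hyne⟩
      have hty : Γ.typ y ∈ Γ.typ '' F := by
        by_contra hc
        exact hyne (hsub _ _ hc hi)
      obtain ⟨f, hf, hfe⟩ := hty
      have : y = f := chamber_typ_inj hB₀ hyB (hFB₀ hf) hfe.symm
      exact ⟨this ▸ hf, hyne⟩
    · rintro ⟨hyF, hyne⟩
      exact ⟨hFB₀ hyF, hyne⟩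
  exact ⟨i, hB, hB', hne, (key B hB hFB).trans (key B' hB' hFB').symm⟩

lemma orbit_of_two {P Q R : Set X} (hch : Γ.Chiral)
    (hP : Γ.IsChamber P) (hQ : Γ.IsChamber Q) (hR : Γ.IsChamber R)
    (hPQ : ¬ Γ.InSameOrbit P Q) (hPR : ¬ Γ.InSameOrbit P R) : Γ.InSameOrbit Q R := by
  obtain ⟨⟨C₁, C₂, _, _, _, hall⟩, _⟩ := hch
  rcases hall P hP with h1 | h1 <;> rcases hall Q hQ with h2 | h2 <;>
    rcases hall R hR with h3 | h3 <;>
    first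
      | exact orbit_trans h2 (orbit_symm h3)
      | exact absurd (orbit_trans h1 (orbit_symm h2)) hPQ
      | exact absurd (orbit_trans h1 (orbit_symm h3)) hPR

/-- Uniqueness of the `i`-adjacent chamber, via chirality. -/
lemma adj_unique {P Q R : Set X} {i : Fin r} (hch : Γ.Chiral)
    (h1 : Γ.Adjacent P Q i) (h2 : Γ.Adjacent P R i) : Q = R := by
  by_contra hne
  set F := {x ∈ P | Γ.typ x ≠ i} with hFdef
  have hFflag : Γ.IsFlag F := isFlag_subset h1.1.1 (Set.sep_subset _ _)
  have hsub : ∀ j k : Fin r, j ∉ Γ.typ '' F → k ∉ Γ.typ '' F → j = k := by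
    have : ∀ j : Fin r, j ∉ Γ.typ '' F → j = i := by
      intro j hj
      by_contra hji
      obtain ⟨x, hx, hxt⟩ := chamber_typ_surj h1.1 j
      exact hj ⟨x, ⟨hx, hxt.symm ▸ hji⟩, hxt⟩
    intro j k hj hk
    rw [this j hj, this k hk]
  have hFQ : F ⊆ Q := by
    rw [hFdef, h1.2.2.2]
    exact Set.sep_subset _ _
  have hFR : F ⊆ R := by
    rw [hFdef, h2.2.2.2]
    exact Set.sep_subset _ _
  obtain ⟨j, hadj⟩ := adjacent_of_corank_le_one hFflag hsub h1.2.1 h2.2.1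
    (by rw [hFdef, h1.2.2.2]; exact Set.sep_subset _ _) hFR hne
  exact hch.2 Q R j hadj (orbit_of_two hch h1.1 h1.2.1 h2.2.1
    (hch.2 P Q i h1) (hch.2 P R i h2))

lemma mem_res_of_chamber {Cc F : Set X} {x : X} (hC : Γ.IsChamber Cc) (hFC : F ⊆ Cc)
    (hx : x ∈ Cc) (hm : Γ.typ x ∉ Γ.typ '' F) : x ∈ Γ.res F :=
  ⟨fun hxF => hm ⟨x, hxF, rfl⟩, fun f hf => hC.1 x hx f (hFC hf)⟩

lemma typ_not_mem_of_res {F : Set X} {z : X} (hz : z ∈ Γ.res F) : Γ.typ z ∉ Γ.typ '' F := by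
  rintro ⟨f, hf, hfe⟩
  exact hz.1 (Γ.eq_of_inc_of_typ_eq z f (hz.2 f hf) hfe.symm ▸ hf)

lemma flag_insert_res {F : Set X} {z : X} (hF : Γ.IsFlag F) (hz : z ∈ Γ.res F) :
    Γ.IsFlag (F ∪ {z}) := by
  intro x hx y hy
  rcases Set.mem_union _ _ _ |>.mp hx with hx' | hx' <;>
    rcases Set.mem_union _ _ _ |>.mp hy with hy' | hy'
  · exact hF x hx' y hy'
  · rw [Set.mem_singleton_iff] at hy'; subst hy'
    exact Γ.inc_symm _ _ (hz.2 x hx')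
  · rw [Set.mem_singleton_iff] at hx'; subst hx'
    exact hz.2 y hy'
  · rw [Set.mem_singleton_iff] at hx' hy'; subst hx'; subst hy'
    exact Γ.inc_refl _

lemma flag_insert2_res {F : Set X} {b c : X} (hF : Γ.IsFlag F) (hb : b ∈ Γ.res F)
    (hc : c ∈ Γ.res F) (hne : b ≠ c) (hbc : Γ.inc b c) : Γ.IsFlag (F ∪ {b, c}) := by
  have h1 : Γ.IsFlag (F ∪ {b}) := flag_insert_res hF hb
  have hc' : c ∈ Γ.res (F ∪ {b}) := by
    constructor
    · rintro (h | h)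
      · exact hc.1 h
      · exact hne (Set.mem_singleton_iff.mp h).symm
    · rintro f (hf | hf)
      · exact hc.2 f hf
      · rw [Set.mem_singleton_iff] at hf; subst hf
        exact Γ.inc_symm _ _ hbc
  have h2 : Γ.IsFlag ((F ∪ {b}) ∪ {c}) := flag_insert_res h1 hc'
  have heq : F ∪ {b, c} = (F ∪ {b}) ∪ {c} := by
    rw [Set.union_assoc, Set.singleton_union]
  rw [heq]
  exact h2

/-- Base case: flags missing at most one type. -/
lemma conn_base {F : Set X} (hF : Γ.IsFlag F)
    (hsub : ∀ i j : Fin r, i ∉ Γ.typ '' F → j ∉ Γ.typ '' F → i = j) :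
    Γ.ChamberConnectedFrom F := by
  intro Cc Cc' hCc hCc' hFC hFC'
  by_cases he : Cc = Cc'
  · subst he; exact Relation.ReflTransGen.refl
  · obtain ⟨i, hadj⟩ := adjacent_of_corank_le_one hF hsub hCc hCc' hFC hFC' he
    exact Relation.ReflTransGen.single ⟨hFC, hFC', i, hadj⟩

/-- Residual connectedness implies strong chamber connectedness. -/
lemma conn_main (hgeo : Γ.IsGeometry) (hrc : Γ.ResiduallyConnected) :
    ∀ n : ℕ, ∀ F : Set X, Γ.IsFlag F → ((Γ.typ '' F)ᶜ : Set (Fin r)).ncard ≤ n →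
      Γ.ChamberConnectedFrom F := by
  intro n
  induction n with
  | zero =>
    intro F hF hcard
    refine conn_base hF fun i j hi hj => ?_
    have : ((Γ.typ '' F)ᶜ : Set (Fin r)) = ∅ := by
      rw [← Set.ncard_eq_zero (Set.toFinite _)]
      omega
    exact absurd (this ▸ hi : i ∈ (∅ : Set (Fin r))) (Set.notMem_empty i)
  | succ n ih =>
    intro F hF hcard
    by_cases h1 : ((Γ.typ '' F)ᶜ : Set (Fin r)).ncard ≤ 1
    · refine conn_base hF fun i j hi hj => ?_
      exact (Set.ncard_le_one (Set.toFinite _)).mp h1 i hi j hj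
    · push_neg at h1
      obtain ⟨i, j, hi, hj, hij⟩ := (Set.one_lt_ncard_iff (Set.toFinite _)).mp h1
      intro Cc Cc' hCc hCc' hFC hFC'
      obtain ⟨-, hconn⟩ := hrc F hF ⟨i, j, hij, hi, hj⟩
      obtain ⟨x, hxC, hxt⟩ := chamber_typ_surj hCc i
      obtain ⟨y, hyC', hyt⟩ := chamber_typ_surj hCc' i
      have hxres : x ∈ Γ.res F := mem_res_of_chamber hCc hFC hxC (hxt.symm ▸ hi)
      have hyres : y ∈ Γ.res F := mem_res_of_chamber hCc' hFC' hyC' (hyt.symm ▸ hi)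
      -- cardinal bound for extended flags
      have hext : ∀ z : X, z ∈ Γ.res F →
          ((Γ.typ '' (F ∪ {z}))ᶜ : Set (Fin r)).ncard ≤ n := by
        intro z hz
        have himg : Γ.typ '' (F ∪ {z}) = Γ.typ '' F ∪ {Γ.typ z} := by
          rw [Set.image_union, Set.image_singleton]
        have hcompl : ((Γ.typ '' (F ∪ {z}))ᶜ : Set (Fin r)) =
            (Γ.typ '' F)ᶜ \ {Γ.typ z} := by
          rw [himg, Set.compl_union, Set.diff_eq]
        rw [hcompl, Set.ncard_diff_singleton_of_mem
          (show Γ.typ z ∈ (Γ.typ '' F)ᶜ from typ_not_mem_of_res hz)]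
        omega
      have hflagext : ∀ z : X, z ∈ Γ.res F → Γ.IsFlag (F ∪ {z}) :=
        fun z hz => flag_insert_res hF hz
      have key : ∀ z : X,
          Relation.ReflTransGen
            (fun a b : X => a ∈ Γ.res F ∧ b ∈ Γ.res F ∧ a ≠ b ∧ Γ.inc a b) x z →
          ∀ B : Set X, Γ.IsChamber B → F ⊆ B → z ∈ B →
            Relation.ReflTransGen
              (fun A B' : Set X => F ⊆ A ∧ F ⊆ B' ∧ ∃ i : Fin r, Γ.Adjacent A B' i) Cc B := by
        intro z hz
        induction hz with
        | refl =>
          intro B hB hFB hxB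
          have := ih (F ∪ {x}) (hflagext x hxres) (hext x hxres) Cc B hCc hB
            (Set.union_subset hFC (Set.singleton_subset_iff.mpr hxC))
            (Set.union_subset hFB (Set.singleton_subset_iff.mpr hxB))
          exact this.lift id fun A B' ⟨u, v, w⟩ =>
            ⟨Set.subset_union_left.trans u, Set.subset_union_left.trans v, w⟩
        | tail hpath hedge ihz =>
          rename_i b c
          obtain ⟨hbres, hcres, hbc, hbcinc⟩ := hedge
          intro B hB hFB hcB
          obtain ⟨B₂, hB₂, hsub₂⟩ := hgeo _ (flag_insert2_res hF hbres hcres hbc hbcinc)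
          have hFB₂ : F ⊆ B₂ := Set.subset_union_left.trans hsub₂
          have hbB₂ : b ∈ B₂ := hsub₂ (Set.mem_union_right _ (Set.mem_insert b {c}))
          have hcB₂ : c ∈ B₂ := hsub₂ (Set.mem_union_right _
            (Set.mem_insert_of_mem b rfl))
          have g1 := ihz B₂ hB₂ hFB₂ hbB₂
          have g2 := ih (F ∪ {c}) (hflagext c hcres) (hext c hcres) B₂ B hB₂ hB
            (Set.union_subset hFB₂ (Set.singleton_subset_iff.mpr hcB₂))
            (Set.union_subset hFB (Set.singleton_subset_iff.mpr hcB))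
          exact g1.trans (g2.lift id fun A B' ⟨u, v, w⟩ =>
            ⟨Set.subset_union_left.trans u, Set.subset_union_left.trans v, w⟩)
      exact key y (hconn x hxres y hyres) Cc' hCc' hFC' hyC'

/-- Only the identity fixes a chamber. -/
lemma aut_fix_all (hgeo : Γ.IsGeometry) (hrc : Γ.ResiduallyConnected) (hch : Γ.Chiral)
    {g : Equiv.Perm X} (hg : g ∈ Γ.autGroup) {Cc : Set X} (hCc : Γ.IsChamber Cc)
    (hfix : ⇑g '' Cc = Cc) : g = 1 := by
  have hcc : Γ.ChamberConnectedFrom (∅ : Set X) :=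
    conn_main hgeo hrc ((Γ.typ '' (∅ : Set X))ᶜ : Set (Fin r)).ncard (∅ : Set X)
      (fun x hx => absurd hx (Set.notMem_empty x)) le_rfl
  have fixall : ∀ B : Set X, Γ.IsChamber B → ⇑g '' B = B := by
    intro B hB
    have hpath := hcc Cc B hCc hB (Set.empty_subset _) (Set.empty_subset _)
    clear hB
    induction hpath with
    | refl => exact hfix
    | tail hpath hedge ihp =>
      rename_i A B₂
      obtain ⟨-, -, i, hadj⟩ := hedge
      have hA : ⇑g '' A = A := ihp
      have h2 : Γ.Adjacent A (⇑g '' B₂) i := hA ▸ aut_image_adj hg hadj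
      exact adj_unique hch h2 hadj
  refine Equiv.ext fun x => ?_
  have hx : Γ.IsFlag {x} := by
    intro a ha b hb
    rw [Set.mem_singleton_iff] at ha hb; subst ha; subst hb
    exact Γ.inc_refl _
  obtain ⟨A, hA, hxA⟩ := hgeo _ hx
  have hgx : g x ∈ A := by
    rw [← fixall A hA]
    exact ⟨x, hxA rfl, rfl⟩
  exact chamber_typ_inj hA hgx (hxA rfl) (aut_typ hg x)

end IncidenceSystem

end Aux

/-- Pointwise stabilizer of a set, as a subgroup of the permutation group. -/
def setStab {X : Type*} (S : Set X) : Subgroup (Equiv.Perm X) where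
  carrier := {g | ∀ x ∈ S, g x = x}
  one_mem' := fun _ _ => rfl
  mul_mem' := by
    intro a b ha hb x hx
    rw [Equiv.Perm.mul_apply, hb x hx, ha x hx]
  inv_mem' := by
    intro a ha x hx
    have h := congrArg (⇑a⁻¹) (ha x hx)
    rw [show a⁻¹ (a x) = x from Equiv.symm_apply_apply a x] at h
    exact h.symm

open IncidenceSystem in
/-- Theorem 7.1: the distinguished generators of a chiral hypertope form a C⁺-group. -/
theorem stmt_1 {X : Type*} {r : ℕ} [NeZero r] (hr : 3 ≤ r)
    (Γ : IncidenceSystem X (Fin r))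
    (hgeo : Γ.IsGeometry) (hthin : Γ.Thin) (hrc : Γ.ResiduallyConnected)
    (hchiral : Γ.Chiral)
    (C : Set X) (hC : Γ.IsChamber C)
    (D : Fin r → Set X) (hD : ∀ j : Fin r, Γ.Adjacent C (D j) j)
    (E : Fin r → Set X) (hE : ∀ i : Fin r, Γ.Adjacent (D 0) (E i) i)
    (α : Fin r → Equiv.Perm X) (hα0 : α 0 = 1)
    (hαmem : ∀ i : Fin r, α i ∈ Γ.autGroup)
    (hαmap : ∀ i : Fin r, i ≠ 0 → ⇑(α i) '' C = E i) :
    Subgroup.closure {φ : Equiv.Perm X | ∃ i : Fin r, i ≠ 0 ∧ φ = α i} = Γ.autGroup ∧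
    ∀ K J : Set (Fin r), K.Nontrivial → J.Nontrivial →
      GplusSub α K ⊓ GplusSub α J = GplusSub α (K ∩ J) := by
  classical
  have Gle : ∀ K : Set (Fin r), GplusSub α K ≤ Γ.autGroup := by
    intro K
    rw [GplusSub, Subgroup.closure_le]
    rintro g ⟨i, -, j, -, rfl⟩
    exact mul_mem (inv_mem (hαmem i)) (hαmem j)
  have himgmul : ∀ (g h : Equiv.Perm X) (S : Set X), ⇑(g * h) '' S = ⇑g '' (⇑h '' S) := by
    intro g h S; rw [Equiv.Perm.coe_mul, Set.image_comp]
  have hinvimg : ∀ (g : Equiv.Perm X) (S : Set X), ⇑g⁻¹ '' (⇑g '' S) = S := by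
    intro g S; rw [Set.image_image]; simp
  have hE0 : E 0 = C := adj_unique hchiral (hE 0) (adj_symm (hD 0))
  have hαmap' : ∀ i : Fin r, ⇑(α i) '' C = E i := by
    intro i
    by_cases h : i = 0
    · subst h; rw [hα0, hE0]; simp
    · exact hαmap i h
  have hDα : ∀ i : Fin r, ⇑(α i)⁻¹ '' (D 0) = D i := by
    intro i
    by_cases h : i = 0
    · subst h; rw [hα0]; simp
    · have h1 : Γ.Adjacent (⇑(α i)⁻¹ '' (E i)) (⇑(α i)⁻¹ '' (D 0)) i :=
        aut_image_adj (inv_mem (hαmem i)) (adj_symm (hE i))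
      rw [← hαmap' i, hinvimg] at h1
      exact adj_unique hchiral h1 (hD i)
  have galK : ∀ (K : Set (Fin r)) (B : Set X),
      Relation.ReflTransGen (fun A B' : Set X => ∃ i ∈ K, Γ.Adjacent A B' i) C B →
      (∃ h ∈ GplusSub α K, ⇑h '' C = B) ∨
      (∃ h ∈ GplusSub α K, ∃ i ∈ K, ⇑(h * (α i)⁻¹) '' (D 0) = B) := by
    intro K B hB
    induction hB with
    | refl => exact Or.inl ⟨1, one_mem _, by simp⟩
    | tail hpath hstep ihb =>
      rename_i b c
      obtain ⟨i, hiK, hadj⟩ := hstep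
      rcases ihb with ⟨h, hh, hb⟩ | ⟨h, hh, j, hjK, hb⟩
      · right
        have hha : h ∈ Γ.autGroup := Gle K hh
        have h2 : Γ.Adjacent b (⇑h '' (D i)) i := hb ▸ aut_image_adj hha (hD i)
        refine ⟨h, hh, i, hiK, ?_⟩
        rw [himgmul, hDα i]
        exact adj_unique hchiral h2 hadj
      · left
        have hψa : h * (α j)⁻¹ ∈ Γ.autGroup := mul_mem (Gle K hh) (inv_mem (hαmem j))
        have h2 : Γ.Adjacent b (⇑(h * (α j)⁻¹) '' (E i)) i := hb ▸ aut_image_adj hψa (hE i)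
        refine ⟨h * ((α j)⁻¹ * α i),
          mul_mem hh (Subgroup.subset_closure ⟨j, hjK, i, hiK, rfl⟩), ?_⟩
        have heq : ⇑(h * ((α j)⁻¹ * α i)) '' C = ⇑(h * (α j)⁻¹) '' (E i) := by
          rw [← mul_assoc, himgmul, hαmap' i]
        rw [heq]
        exact adj_unique hchiral h2 hadj
  have orbDC : ∀ (g ψ : Equiv.Perm X), g ∈ Γ.autGroup → ψ ∈ Γ.autGroup →
      ⇑ψ '' (D 0) = ⇑g '' C → False := by
    intro g ψ hg hψ heq
    refine hchiral.2 C (D 0) 0 (hD 0) ⟨ψ⁻¹ * g, mul_mem (inv_mem hψ) hg, ?_⟩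
    rw [himgmul, ← heq, hinvimg]
  have extract : ∀ (K : Set (Fin r)) (g : Equiv.Perm X), g ∈ Γ.autGroup →
      Relation.ReflTransGen (fun A B' : Set X => ∃ i ∈ K, Γ.Adjacent A B' i) C (⇑g '' C) →
      g ∈ GplusSub α K := by
    intro K g hg hgal
    rcases galK K _ hgal with ⟨h, hh, heq⟩ | ⟨h, hh, i, hiK, heq⟩
    · have hha : h ∈ Γ.autGroup := Gle K hh
      have hone : h⁻¹ * g = 1 := by
        apply aut_fix_all hgeo hrc hchiral (mul_mem (inv_mem hha) hg) hC
        rw [himgmul, ← heq, hinvimg]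
      rw [inv_mul_eq_one] at hone
      exact hone ▸ hh
    · exact (orbDC g _ hg (mul_mem (Gle K hh) (inv_mem (hαmem i))) heq).elim
  have dirK : ∀ (K : Set (Fin r)) (A B : Set X) (i : Fin r),
      {x ∈ C | Γ.typ x ∉ K} ⊆ A → {x ∈ C | Γ.typ x ∉ K} ⊆ B → Γ.Adjacent A B i → i ∈ K := by
    intro K A B i hA hB hadj
    by_contra hiK
    obtain ⟨xi, hxiC, hxit⟩ := chamber_typ_surj hC i
    have hxiF : xi ∈ {x ∈ C | Γ.typ x ∉ K} := ⟨hxiC, by rw [hxit]; exact hiK⟩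
    apply hadj.2.2.1
    have side : ∀ (A' B' : Set X), Γ.Adjacent A' B' i →
        {x ∈ C | Γ.typ x ∉ K} ⊆ A' → {x ∈ C | Γ.typ x ∉ K} ⊆ B' → A' ⊆ B' := by
      intro A' B' hadj' hA' hB' a ha
      by_cases hat : Γ.typ a = i
      · have : a = xi := chamber_typ_inj hadj'.1 ha (hA' hxiF) (by rw [hat, hxit])
        exact this ▸ hB' hxiF
      · have hmem : a ∈ {x ∈ B' | Γ.typ x ≠ i} := by
          rw [← hadj'.2.2.2]
          exact ⟨ha, hat⟩
        exact hmem.1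
    exact Set.Subset.antisymm (side A B hadj hA hB) (side B A (adj_symm hadj) hB hA)
  have genfix : ∀ (K : Set (Fin r)), ∀ i ∈ K, ∀ j ∈ K, ∀ x ∈ {x ∈ C | Γ.typ x ∉ K},
      ((α i)⁻¹ * α j) x = x := by
    intro K i hiK j hjK x hx
    have hga : (α i)⁻¹ * α j ∈ Γ.autGroup := mul_mem (inv_mem (hαmem i)) (hαmem j)
    have hgC : ⇑((α i)⁻¹ * α j) '' C = ⇑(α i)⁻¹ '' (E j) := by
      rw [himgmul, hαmap' j]
    have hadj : Γ.Adjacent (D i) (⇑((α i)⁻¹ * α j) '' C) j := by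
      rw [hgC, ← hDα i]
      exact aut_image_adj (inv_mem (hαmem i)) (hE j)
    have h1 : x ∈ D i := by
      have hm : x ∈ {y ∈ C | Γ.typ y ≠ i} := ⟨hx.1, fun h => hx.2 (by rw [h]; exact hiK)⟩
      rw [(hD i).2.2.2] at hm
      exact hm.1
    have h2 : x ∈ ⇑((α i)⁻¹ * α j) '' C := by
      have hm : x ∈ {y ∈ D i | Γ.typ y ≠ j} := ⟨h1, fun h => hx.2 (by rw [h]; exact hjK)⟩
      rw [hadj.2.2.2] at hm
      exact hm.1
    have hgchamb : Γ.IsChamber (⇑((α i)⁻¹ * α j) '' C) := aut_image_chamber hga hC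
    exact chamber_typ_inj hgchamb ⟨x, hx.1, rfl⟩ h2 (aut_typ hga x)
  have fixFK : ∀ (K : Set (Fin r)) (g : Equiv.Perm X), g ∈ GplusSub α K →
      ∀ x ∈ {x ∈ C | Γ.typ x ∉ K}, g x = x := by
    intro K g hg
    have hle : GplusSub α K ≤ setStab {x ∈ C | Γ.typ x ∉ K} := by
      rw [GplusSub, Subgroup.closure_le]
      rintro φ ⟨i, hiK, j, hjK, rfl⟩
      exact fun x hx => genfix K i hiK j hjK x hx
    exact hle hg
  have memG_of_sub : ∀ (K : Set (Fin r)) (g : Equiv.Perm X), g ∈ Γ.autGroup →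
      {x ∈ C | Γ.typ x ∉ K} ⊆ ⇑g '' C → g ∈ GplusSub α K := by
    intro K g hg hsub
    have hflag : Γ.IsFlag {x ∈ C | Γ.typ x ∉ K} := isFlag_subset hC.1 (Set.sep_subset _ _)
    have hgal := conn_main hgeo hrc _ _ hflag le_rfl C (⇑g '' C) hC (aut_image_chamber hg hC)
      (Set.sep_subset _ _) hsub
    exact extract K g hg (hgal.lift id fun A B h => ⟨_, dirK K A B h.2.2.choose h.1 h.2.1
      h.2.2.choose_spec, h.2.2.choose_spec⟩)
  have sub_of_memG : ∀ (K : Set (Fin r)) (g : Equiv.Perm X), g ∈ GplusSub α K →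
      {x ∈ C | Γ.typ x ∉ K} ⊆ ⇑g '' C := by
    intro K g hg x hx
    exact ⟨x, hx.1, fixFK K g hg x hx⟩
  have Gmono : ∀ (K' K'' : Set (Fin r)), K' ⊆ K'' → GplusSub α K' ≤ GplusSub α K'' := by
    intro K' K'' hsub
    apply Subgroup.closure_mono
    rintro φ ⟨i, hi, j, hj, rfl⟩
    exact ⟨i, hsub hi, j, hsub hj, rfl⟩
  constructor
  · apply le_antisymm
    · rw [Subgroup.closure_le]
      rintro φ ⟨i, hi0, rfl⟩
      exact hαmem i
    · intro g hg
      have h1 : g ∈ GplusSub α Set.univ := by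
        apply memG_of_sub Set.univ g hg
        rintro x ⟨-, hx⟩
        exact absurd (Set.mem_univ _) hx
      have h2 : GplusSub α Set.univ ≤
          Subgroup.closure {φ : Equiv.Perm X | ∃ i : Fin r, i ≠ 0 ∧ φ = α i} := by
        rw [GplusSub, Subgroup.closure_le]
        rintro φ ⟨i, -, j, -, rfl⟩
        have hmem : ∀ k : Fin r, α k ∈
            Subgroup.closure {φ : Equiv.Perm X | ∃ i : Fin r, i ≠ 0 ∧ φ = α i} := by
          intro k
          by_cases hk : k = 0
          · rw [hk, hα0]; exact one_mem _
          · exact Subgroup.subset_closure ⟨k, hk, rfl⟩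
        exact mul_mem (inv_mem (hmem i)) (hmem j)
      exact h2 h1
  · intro K J _ _
    apply le_antisymm
    · intro g hg
      obtain ⟨hgK, hgJ⟩ := Subgroup.mem_inf.mp hg
      apply memG_of_sub _ g (Gle K hgK)
      intro x hx
      by_cases hxK : Γ.typ x ∈ K
      · exact sub_of_memG J g hgJ ⟨hx.1, fun h => hx.2 ⟨hxK, h⟩⟩
      · exact sub_of_memG K g hgK ⟨hx.1, hxK⟩
    · exact le_inf (Gmono _ _ Set.inter_subset_left) (Gmono _ _ Set.inter_subset_right)
end

section
/- Let (G, {ρ_0,...,ρ_{r−1}}) be a C-group of rank r, let I = {0,...,r−1}, and let Γ = Γ(G;(G_i)_{i∈I}) be the coset geometry with G_i = ⟨ρ_j : j ∈ I \ {i}⟩ for all i ∈ I. If G is flag-transitive on Γ, then Γ is a regular hypertope: Γ is a thin, residually connected, flag-transitive incidence geometry. -/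
open Pointwise

section Aux

variable {G : Type*} [Group G] {ι : Type*}

lemma mem_rcoset_iff {H : Subgroup G} {g x : G} : x ∈ rcoset H g ↔ x * g⁻¹ ∈ H := Iff.rfl

/-- The element `(i, G_i g)` of the coset geometry. -/
def CGelt (Gi : ι → Subgroup G) (i : ι) (g : G) : CosetElt Gi := ⟨(i, rcoset (Gi i) g), g, rfl⟩

lemma CGelt_ne {Gi : ι → Subgroup G} {i j : ι} (g h : G) (hne : i ≠ j) :
    CGelt Gi i g ≠ CGelt Gi j h := fun hc => hne (congrArg (fun z => z.1.1) hc)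

/-- The partial chamber of type `T` at `a`. -/
def pflag (Gi : ι → Subgroup G) (T : Set ι) (a : G) : Set (CosetElt Gi) :=
  {x | x.1.1 ∈ T ∧ x.1.2 = rcoset (Gi x.1.1) a}

lemma CGelt_mem_pflag {Gi : ι → Subgroup G} {T : Set ι} {a : G} {i : ι} (hi : i ∈ T) :
    CGelt Gi i a ∈ pflag Gi T a := ⟨hi, rfl⟩

lemma pflag_isFlag (Gi : ι → Subgroup G) (T : Set ι) (a : G) :
    (cosetGeometry Gi).IsFlag (pflag Gi T a) := by
  intro x hx y hy
  exact ⟨a, by rw [hx.2]; exact mem_rcoset_self _ a, by rw [hy.2]; exact mem_rcoset_self _ a⟩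

lemma typ_image_pflag (Gi : ι → Subgroup G) (T : Set ι) (a : G) :
    (cosetGeometry Gi).typ '' pflag Gi T a = T := by
  ext i
  constructor
  · rintro ⟨x, hx, rfl⟩; exact hx.1
  · intro hi; exact ⟨CGelt Gi i a, CGelt_mem_pflag hi, rfl⟩

lemma rmul_pflag (Gi : ι → Subgroup G) (T : Set ι) (a b : G) :
    rmul Gi b '' pflag Gi T a = pflag Gi T (a * b) := by
  ext x
  constructor
  · rintro ⟨y, hy, rfl⟩
    exact ⟨hy.1, show (fun x => x * b) '' y.1.2 = rcoset (Gi y.1.1) (a * b) by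
      rw [hy.2, rcoset_image_mul]⟩
  · rintro ⟨h1, h2⟩
    refine ⟨CGelt Gi x.1.1 a, CGelt_mem_pflag h1, ?_⟩
    apply Subtype.ext
    show (x.1.1, (fun z => z * b) '' rcoset (Gi x.1.1) a) = x.1
    rw [rcoset_image_mul, ← h2]

lemma flag_eq_pflag {Gi : ι → Subgroup G} (hft : GFlagTransitive Gi) (F : Set (CosetElt Gi))
    (hF : (cosetGeometry Gi).IsFlag F) :
    ∃ a : G, F = pflag Gi ((cosetGeometry Gi).typ '' F) a := by
  obtain ⟨a, ha⟩ := hft (pflag Gi ((cosetGeometry Gi).typ '' F) 1) F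
    (pflag_isFlag _ _ _) hF (by rw [typ_image_pflag])
  refine ⟨1 * a, ?_⟩
  conv_lhs => rw [← ha, rmul_pflag]

end Aux
section Aux2

variable {G : Type*} [Group G] {r : ℕ}

lemma inter_lemma {ρ : Fin r → G} (hC : IsCGroup ρ) (T : Set (Fin r)) (g : G)
    (hg : ∀ j ∈ T, g ∈ Subgroup.closure (ρ '' ({j}ᶜ : Set (Fin r)))) :
    g ∈ Subgroup.closure (ρ '' Tᶜ) := by
  have key : ∀ (S : Set (Fin r)), S.Finite → ∀ g : G,
      (∀ j ∈ S, g ∈ Subgroup.closure (ρ '' ({j}ᶜ : Set (Fin r)))) →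
      g ∈ Subgroup.closure (ρ '' Sᶜ) := by
    intro S hS
    refine Set.Finite.induction_on (motive := fun S _ => ∀ g : G,
        (∀ j ∈ S, g ∈ Subgroup.closure (ρ '' ({j}ᶜ : Set (Fin r)))) →
        g ∈ Subgroup.closure (ρ '' Sᶜ)) S hS ?_ ?_
    · intro g _
      rw [Set.compl_empty, Set.image_univ, hC.2.1]
      trivial
    · intro k S hk hSfin ih g hg
      have h1 : g ∈ Subgroup.closure (ρ '' ({k}ᶜ : Set (Fin r))) := hg k (Set.mem_insert _ _)
      have h2 : g ∈ Subgroup.closure (ρ '' Sᶜ) :=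
        ih g (fun j hj => hg j (Set.mem_insert_of_mem _ hj))
      have h3 : g ∈ Subgroup.closure (ρ '' (({k}ᶜ : Set (Fin r)) ∩ Sᶜ)) := by
        rw [← hC.2.2]
        exact Subgroup.mem_inf.2 ⟨h1, h2⟩
      have h4 : (({k}ᶜ : Set (Fin r)) ∩ Sᶜ) = (insert k S)ᶜ := by
        ext x; simp [not_or]
      rwa [h4] at h3
  exact key T (Set.toFinite T) g hg

lemma mem_closure_pair {x g : G} (hx : x * x = 1) (h : g ∈ Subgroup.closure ({x} : Set G)) :
    g = 1 ∨ g = x := by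
  induction h using Subgroup.closure_induction with
  | mem y hy => exact Or.inr hy
  | one => exact Or.inl rfl
  | mul y z _ _ hy hz =>
    rcases hy with rfl | rfl <;> rcases hz with rfl | rfl <;>
      simp_all
  | inv y _ hy =>
    rcases hy with rfl | rfl
    · exact Or.inl inv_one
    · exact Or.inr (inv_eq_of_mul_eq_one_right hx)

lemma rho_not_mem {ρ : Fin r → G} (hC : IsCGroup ρ) (i : Fin r) :
    ρ i ∉ Subgroup.closure (ρ '' ({i}ᶜ : Set (Fin r))) := by
  intro hmem
  have h1 : ρ i ∈ Subgroup.closure (ρ '' ({i} : Set (Fin r))) :=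
    Subgroup.subset_closure ⟨i, rfl, rfl⟩
  have h2 : ρ i ∈ Subgroup.closure (ρ '' (({i} : Set (Fin r)) ∩ {i}ᶜ)) := by
    rw [← hC.2.2]
    exact Subgroup.mem_inf.2 ⟨h1, hmem⟩
  rw [Set.inter_compl_self, Set.image_empty, Subgroup.closure_empty, Subgroup.mem_bot] at h2
  exact (hC.1 i).1 h2

lemma exists_list_of_mem_closure' {s : Set G} {x : G} (h : x ∈ Subgroup.closure s) :
    ∃ l : List G, (∀ y ∈ l, y ∈ s ∨ y⁻¹ ∈ s) ∧ l.prod = x := by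
  have hx : x ∈ Submonoid.closure (s ∪ s⁻¹) := by
    rw [← Subgroup.closure_toSubmonoid]; exact h
  obtain ⟨l, hl, hp⟩ := Submonoid.exists_list_of_mem_closure hx
  exact ⟨l, fun y hy => hl y hy, hp⟩

lemma mem_res_pflag {ρ : Fin r → G} (hC : IsCGroup ρ) {Gi : Fin r → Subgroup G}
    (hGi : ∀ i : Fin r, Gi i = Subgroup.closure (ρ '' ({i}ᶜ : Set (Fin r))))
    (hft : GFlagTransitive Gi) (T : Set (Fin r)) (a : G) (x : CosetElt Gi) :
    x ∈ (cosetGeometry Gi).res (pflag Gi T a) ↔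
      x.1.1 ∉ T ∧ ∃ h ∈ Subgroup.closure (ρ '' Tᶜ), x.1.2 = rcoset (Gi x.1.1) (h * a) := by
  constructor
  · rintro ⟨hx1, hx2⟩
    have hiT : x.1.1 ∉ T := by
      intro hmem
      apply hx1
      have heq := (cosetGeometry Gi).eq_of_inc_of_typ_eq x (CGelt Gi x.1.1 a)
        (hx2 _ (CGelt_mem_pflag hmem)) rfl
      rw [heq]
      exact CGelt_mem_pflag hmem
    refine ⟨hiT, ?_⟩
    have hflag : (cosetGeometry Gi).IsFlag (insert x (pflag Gi T a)) := by
      rintro y (rfl | hy) z (rfl | hz)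
      · exact (cosetGeometry Gi).inc_refl _
      · exact hx2 _ hz
      · exact (cosetGeometry Gi).inc_symm _ _ (hx2 _ hy)
      · exact pflag_isFlag Gi T a _ hy _ hz
    obtain ⟨b, hb⟩ := flag_eq_pflag hft _ hflag
    have htypF' : (cosetGeometry Gi).typ '' (insert x (pflag Gi T a)) = insert x.1.1 T := by
      rw [Set.image_insert_eq, typ_image_pflag]; rfl
    rw [htypF'] at hb
    have hx : x ∈ pflag Gi (insert x.1.1 T) b := hb ▸ Set.mem_insert _ _
    have hT : ∀ j ∈ T, b * a⁻¹ ∈ Gi j := by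
      intro j hj
      have hmem : CGelt Gi j a ∈ pflag Gi (insert x.1.1 T) b :=
        hb ▸ Set.mem_insert_of_mem _ (CGelt_mem_pflag hj)
      have h2 : rcoset (Gi j) a = rcoset (Gi j) b := hmem.2
      have h3 : a ∈ rcoset (Gi j) b := h2 ▸ mem_rcoset_self _ a
      have h4 : a * b⁻¹ ∈ Gi j := h3
      have h5 := (Gi j).inv_mem h4
      rwa [mul_inv_rev, inv_inv] at h5
    have hba : b * a⁻¹ ∈ Subgroup.closure (ρ '' Tᶜ) :=
      inter_lemma hC T _ (fun j hj => (hGi j) ▸ hT j hj)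
    refine ⟨b * a⁻¹, hba, ?_⟩
    rw [hx.2]
    congr 1
    group
  · rintro ⟨hiT, h, hh, hx⟩
    refine ⟨fun hmem => hiT hmem.1, ?_⟩
    rintro f ⟨hf1, hf2⟩
    refine ⟨h * a, ?_, ?_⟩
    · rw [hx]; exact mem_rcoset_self _ _
    · rw [hf2]
      show h * a * a⁻¹ ∈ Gi f.1.1
      rw [show h * a * a⁻¹ = h by group, hGi f.1.1]
      refine Subgroup.closure_mono (Set.image_mono ?_) hh
      intro y hy hyf
      rw [Set.mem_singleton_iff] at hyf
      exact hy (hyf ▸ hf1)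

end Aux2
section Aux3

variable {G : Type*} [Group G] {r : ℕ}

lemma conn_aux {ρ : Fin r → G} (hC : IsCGroup ρ) {Gi : Fin r → Subgroup G}
    (hGi : ∀ i : Fin r, Gi i = Subgroup.closure (ρ '' ({i}ᶜ : Set (Fin r))))
    (hft : GFlagTransitive Gi) (T : Set (Fin r)) (a : G) {i j : Fin r}
    (hij : i ≠ j) (hiT : i ∉ T) (hjT : j ∉ T) :
    ∀ l : List G, (∀ y ∈ l, ∃ m, m ∉ T ∧ y = ρ m) → ∀ k, k ∉ T →
      Relation.ReflTransGen
        (fun u v : CosetElt Gi => u ∈ (cosetGeometry Gi).res (pflag Gi T a) ∧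
          v ∈ (cosetGeometry Gi).res (pflag Gi T a) ∧ u ≠ v ∧ (cosetGeometry Gi).inc u v)
        (CGelt Gi k (l.prod * a)) (CGelt Gi i a) := by
  intro l
  induction l with
  | nil =>
    intro _ k hk
    rw [List.prod_nil, one_mul]
    by_cases hki : k = i
    · subst hki
      exact Relation.ReflTransGen.refl
    · refine Relation.ReflTransGen.single
        ⟨?_, ?_, CGelt_ne a a hki, ⟨a, mem_rcoset_self _ a, mem_rcoset_self _ a⟩⟩
      · exact (mem_res_pflag hC hGi hft T a _).2 ⟨hk, 1, one_mem _, by rw [one_mul]; rfl⟩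
      · exact (mem_res_pflag hC hGi hft T a _).2 ⟨hiT, 1, one_mem _, by rw [one_mul]; rfl⟩
  | cons y l ih =>
    intro hl k hk
    obtain ⟨m, hmT, rfl⟩ := hl y (List.mem_cons_self (a := y) (l := l))
    have hlmem : ∀ z ∈ l, ∃ m', m' ∉ T ∧ z = ρ m' :=
      fun z hz => hl z (List.mem_cons_of_mem _ hz)
    have hprod : l.prod ∈ Subgroup.closure (ρ '' Tᶜ) := by
      apply Subgroup.list_prod_mem
      intro z hz
      obtain ⟨m', hm', rfl⟩ := hlmem z hz
      exact Subgroup.subset_closure ⟨m', hm', rfl⟩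
    rw [List.prod_cons]
    by_cases hkm : k = m
    · subst hkm
      set j₀ : Fin r := if k = i then j else i with hj₀
      have hj₀T : j₀ ∉ T := by rw [hj₀]; split <;> assumption
      have hj₀k : j₀ ≠ k := by
        rw [hj₀]; split
        · next h => rw [h]; exact hij.symm
        · next h => exact fun hc => h hc.symm
      refine Relation.ReflTransGen.head ⟨?_, ?_, CGelt_ne _ _ hj₀k.symm, ?_⟩ (ih hlmem j₀ hj₀T)
      · refine (mem_res_pflag hC hGi hft T a _).2 ⟨hk, ρ k * l.prod, ?_, rfl⟩
        exact mul_mem (Subgroup.subset_closure ⟨k, hmT, rfl⟩) hprod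
      · exact (mem_res_pflag hC hGi hft T a _).2 ⟨hj₀T, l.prod, hprod, rfl⟩
      · refine ⟨ρ k * l.prod * a, mem_rcoset_self _ _, ?_⟩
        show (ρ k * l.prod * a) * (l.prod * a)⁻¹ ∈ Gi j₀
        rw [show (ρ k * l.prod * a) * (l.prod * a)⁻¹ = ρ k by group, hGi j₀]
        refine Subgroup.subset_closure ⟨k, ?_, rfl⟩
        simp only [Set.mem_compl_iff, Set.mem_singleton_iff]
        exact fun hc => hj₀k hc.symm
    · have hmem : ρ m * l.prod * a ∈ rcoset (Gi k) (l.prod * a) := by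
        show (ρ m * l.prod * a) * (l.prod * a)⁻¹ ∈ Gi k
        rw [show (ρ m * l.prod * a) * (l.prod * a)⁻¹ = ρ m by group, hGi k]
        refine Subgroup.subset_closure ⟨m, ?_, rfl⟩
        simp only [Set.mem_compl_iff, Set.mem_singleton_iff]
        exact fun hc => hkm hc.symm
      have hco : CGelt Gi k (ρ m * l.prod * a) = CGelt Gi k (l.prod * a) := by
        apply Subtype.ext
        show (k, rcoset (Gi k) (ρ m * l.prod * a)) = (k, rcoset (Gi k) (l.prod * a))
        rw [rcoset_eq_of_mem hmem]
      rw [hco]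
      exact ih hlmem k hk

lemma connectedOn_res_pflag {ρ : Fin r → G} (hC : IsCGroup ρ) {Gi : Fin r → Subgroup G}
    (hGi : ∀ i : Fin r, Gi i = Subgroup.closure (ρ '' ({i}ᶜ : Set (Fin r))))
    (hft : GFlagTransitive Gi) (T : Set (Fin r)) (a : G) {i j : Fin r}
    (hij : i ≠ j) (hiT : i ∉ T) (hjT : j ∉ T) :
    (cosetGeometry Gi).ConnectedOn ((cosetGeometry Gi).res (pflag Gi T a)) := by
  constructor
  · exact ⟨CGelt Gi i a, (mem_res_pflag hC hGi hft T a _).2 ⟨hiT, 1, one_mem _, by rw [one_mul]; rfl⟩⟩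
  · have hsym : Symmetric (fun u v : CosetElt Gi =>
        u ∈ (cosetGeometry Gi).res (pflag Gi T a) ∧
          v ∈ (cosetGeometry Gi).res (pflag Gi T a) ∧ u ≠ v ∧ (cosetGeometry Gi).inc u v) :=
      fun u v ⟨h1, h2, h3, h4⟩ => ⟨h2, h1, h3.symm, (cosetGeometry Gi).inc_symm _ _ h4⟩
    have key : ∀ z ∈ (cosetGeometry Gi).res (pflag Gi T a),
        Relation.ReflTransGen
          (fun u v : CosetElt Gi => u ∈ (cosetGeometry Gi).res (pflag Gi T a) ∧
            v ∈ (cosetGeometry Gi).res (pflag Gi T a) ∧ u ≠ v ∧ (cosetGeometry Gi).inc u v)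
          z (CGelt Gi i a) := by
      intro z hz
      rw [mem_res_pflag hC hGi hft] at hz
      obtain ⟨hzT, h, hh, hz2⟩ := hz
      obtain ⟨l, hl, hlp⟩ := exists_list_of_mem_closure' hh
      have hz' : z = CGelt Gi z.1.1 (h * a) := by
        apply Subtype.ext
        show z.1 = (z.1.1, rcoset (Gi z.1.1) (h * a))
        rw [← hz2]
      have hconn := conn_aux hC hGi hft T a hij hiT hjT l ?entries z.1.1 hzT
      case entries =>
        intro y hy
        rcases hl y hy with hys | hys
        · obtain ⟨m, hm, rfl⟩ := hys
          exact ⟨m, hm, rfl⟩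
        · obtain ⟨m, hm, hmy⟩ := hys
          refine ⟨m, hm, ?_⟩
          have hinv : (ρ m)⁻¹ = ρ m := inv_eq_of_mul_eq_one_right (hC.1 m).2
          rw [← hinv, hmy, inv_inv]
      rw [hlp] at hconn
      rwa [← hz'] at hconn
    intro x hx y hy
    exact (key x hx).trans ((@Relation.ReflTransGen.symmetric _ _ ⟨fun _ _ h => hsym h⟩).symm _ _ (key y hy))

lemma res_pflag_pair {ρ : Fin r → G} (hC : IsCGroup ρ) {Gi : Fin r → Subgroup G}
    (hGi : ∀ i : Fin r, Gi i = Subgroup.closure (ρ '' ({i}ᶜ : Set (Fin r))))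
    (hft : GFlagTransitive Gi) (T : Set (Fin r)) (a : G) {i : Fin r}
    (hiT : i ∉ T) (hun : ∀ j, j ∉ T → j = i) :
    (cosetGeometry Gi).res (pflag Gi T a) = {CGelt Gi i a, CGelt Gi i (ρ i * a)} := by
  have hTc : (Tᶜ : Set (Fin r)) = {i} := by
    ext k
    simp only [Set.mem_compl_iff, Set.mem_singleton_iff]
    exact ⟨fun h => hun k h, fun h => h ▸ hiT⟩
  ext z
  rw [mem_res_pflag hC hGi hft]
  constructor
  · rintro ⟨hz1, h, hh, hz2⟩
    have hz1' : z.1.1 = i := hun _ hz1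
    rw [hTc, Set.image_singleton] at hh
    rcases mem_closure_pair (hC.1 i).2 hh with rfl | rfl
    · left
      apply Subtype.ext
      show z.1 = (i, rcoset (Gi i) a)
      have h' : z.1 = (z.1.1, rcoset (Gi z.1.1) (1 * a)) := by rw [← hz2]
      rw [h', hz1', one_mul]
    · right
      apply Subtype.ext
      show z.1 = (i, rcoset (Gi i) (ρ i * a))
      have h' : z.1 = (z.1.1, rcoset (Gi z.1.1) (ρ i * a)) := by rw [← hz2]
      rw [h', hz1']
  · rintro (rfl | rfl)
    · exact ⟨hiT, 1, one_mem _, by rw [one_mul]; rfl⟩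
    · exact ⟨hiT, ρ i, Subgroup.subset_closure (by rw [hTc, Set.image_singleton]; rfl), rfl⟩

end Aux3

section Aux4

variable {G : Type*} [Group G] {ι : Type*}

lemma rmul_one' (Gi : ι → Subgroup G) (p : CosetElt Gi) : rmul Gi 1 p = p := by
  apply Subtype.ext
  show (p.1.1, (fun x => x * 1) '' p.1.2) = p.1
  simp

lemma rmul_rmul (Gi : ι → Subgroup G) (a b : G) (p : CosetElt Gi) :
    rmul Gi b (rmul Gi a p) = rmul Gi (a * b) p := by
  apply Subtype.ext
  show (p.1.1, (fun x => x * b) '' ((fun x => x * a) '' p.1.2)) =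
    (p.1.1, (fun x => x * (a * b)) '' p.1.2)
  rw [Set.image_image]
  simp [mul_assoc]

/-- Right multiplication as a permutation of the coset geometry. -/
def rmulEquiv (Gi : ι → Subgroup G) (a : G) : Equiv.Perm (CosetElt Gi) where
  toFun := rmul Gi a
  invFun := rmul Gi a⁻¹
  left_inv p := by rw [rmul_rmul, mul_inv_cancel, rmul_one']
  right_inv p := by rw [rmul_rmul, inv_mul_cancel, rmul_one']

lemma rmulEquiv_mem (Gi : ι → Subgroup G) (a : G) :
    rmulEquiv Gi a ∈ (cosetGeometry Gi).autGroup := by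
  refine ⟨fun x => rfl, fun x y => ?_⟩
  show (((fun z => z * a) '' x.1.2) ∩ ((fun z => z * a) '' y.1.2)).Nonempty ↔ _
  rw [← Set.image_inter (mul_left_injective a)]
  exact Set.image_nonempty

end Aux4
/-- Theorem 4.6: a flag-transitive coset geometry of a C-group is a regular hypertope. -/
theorem stmt_2 {G : Type*} [Group G] {r : ℕ} (ρ : Fin r → G)
    (hCgrp : IsCGroup ρ)
    (Gi : Fin r → Subgroup G)
    (hGi : ∀ i : Fin r, Gi i = Subgroup.closure (ρ '' ({i}ᶜ : Set (Fin r))))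
    (hft : GFlagTransitive Gi) :
    (cosetGeometry Gi).IsGeometry ∧ (cosetGeometry Gi).Thin ∧
      (cosetGeometry Gi).ResiduallyConnected ∧ (cosetGeometry Gi).FlagTransitive := by

  refine ⟨?_, ?_, ?_, ?_⟩
  · -- IsGeometry
    intro F hF
    obtain ⟨a, ha⟩ := flag_eq_pflag hft F hF
    refine ⟨pflag Gi Set.univ a, ⟨pflag_isFlag _ _ _, typ_image_pflag _ _ _⟩, ?_⟩
    rw [ha]
    intro x hx
    exact ⟨Set.mem_univ _, hx.2⟩
  · -- Thin
    intro F hF hex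
    obtain ⟨i, hi, hun⟩ := hex
    obtain ⟨a, ha⟩ := flag_eq_pflag hft F hF
    refine ⟨CGelt Gi i a, CGelt Gi i (ρ i * a), ?_, ?_⟩
    · intro hc
      have h2 : rcoset (Gi i) a = rcoset (Gi i) (ρ i * a) :=
        congrArg (fun z : CosetElt Gi => z.1.2) hc
      have h3 : ρ i * a ∈ rcoset (Gi i) a := by rw [h2]; exact mem_rcoset_self _ _
      have h4 : (ρ i * a) * a⁻¹ ∈ Gi i := h3
      rw [show (ρ i * a) * a⁻¹ = ρ i by group, hGi i] at h4
      exact rho_not_mem hCgrp i h4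
    · have hpair := res_pflag_pair hCgrp hGi hft ((cosetGeometry Gi).typ '' F) a hi
        (fun j hj => hun j hj)
      rwa [← ha] at hpair
  · -- ResiduallyConnected
    rintro F hF ⟨i, j, hij, hiT, hjT⟩
    obtain ⟨a, ha⟩ := flag_eq_pflag hft F hF
    have hconn := connectedOn_res_pflag hCgrp hGi hft ((cosetGeometry Gi).typ '' F) a
      hij hiT hjT
    rwa [← ha] at hconn
  · -- FlagTransitive
    intro F F' hF hF' htyp
    obtain ⟨a, ha⟩ := hft F F' hF hF' htyp
    exact ⟨rmulEquiv Gi a, rmulEquiv_mem Gi a, ha⟩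
end

section
/- (Dehon.) Let Γ = Γ(G;(G_i)_{i∈I}) be a coset geometry with I finite on which G is flag-transitive (so that Γ is an incidence geometry). Then Γ is residually connected if and only if for every subset J ⊆ I of cardinality at most |I| − 2, ∩_{j∈J} G_j = ⟨ ∩_{j∈J∪{k}} G_j : k ∈ I \ J ⟩, i.e. the subgroup ∩_{j∈J} G_j is generated by the union over k ∈ I \ J of the subgroups ∩_{j∈J∪{k}} G_j. -/
open Pointwise

section Dehon

open Relation

variable {G : Type*} [Group G] {n : ℕ} {Gi : Fin n → Subgroup G}

namespace Dehon

/-- The element `(k, G_k g)` of the coset geometry. -/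
def elt (Gi : Fin n → Subgroup G) (k : Fin n) (g : G) : CosetElt Gi :=
  ⟨(k, rcoset (Gi k) g), g, rfl⟩

lemma eltExt {x y : CosetElt Gi} (h1 : x.1.1 = y.1.1) (h2 : x.1.2 = y.1.2) : x = y :=
  Subtype.ext (Prod.ext h1 h2)

lemma eq_elt (x : CosetElt Gi) : ∃ k g, x = elt Gi k g := by
  obtain ⟨g, hg⟩ := x.2
  exact ⟨x.1.1, g, eltExt rfl hg⟩

lemma elt_eq_of_mem {k : Fin n} {g h : G} (hx : h ∈ rcoset (Gi k) g) :
    elt Gi k h = elt Gi k g := eltExt rfl (rcoset_eq_of_mem hx)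

lemma eq_elt_of_mem {x : CosetElt Gi} {a : G} (ha : a ∈ x.1.2) : x = elt Gi x.1.1 a := by
  obtain ⟨g, hg⟩ := x.2
  refine eltExt rfl ?_
  show x.1.2 = rcoset (Gi x.1.1) a
  rw [hg]
  exact (rcoset_eq_of_mem (hg ▸ ha)).symm

lemma mem_rcoset_one {H : Subgroup G} {a : G} : a ∈ rcoset H 1 ↔ a ∈ H := by
  simp [rcoset]

lemma mul_inv_mem_of_rcoset {H : Subgroup G} {g a b : G}
    (ha : a ∈ rcoset H g) (hb : b ∈ rcoset H g) : a * b⁻¹ ∈ H := by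
  have ha' : a * g⁻¹ ∈ H := ha
  have hb' : b * g⁻¹ ∈ H := hb
  have h2 := H.mul_mem ha' (H.inv_mem hb')
  have h3 : a * g⁻¹ * (b * g⁻¹)⁻¹ = a * b⁻¹ := by group
  rwa [h3] at h2

/-- The standard flag of type `T`. -/
def stdFlag (Gi : Fin n → Subgroup G) (T : Set (Fin n)) : Set (CosetElt Gi) :=
  {x | x.1.1 ∈ T ∧ x.1.2 = rcoset (Gi x.1.1) 1}

lemma stdFlag_isFlag (T : Set (Fin n)) : (cosetGeometry Gi).IsFlag (stdFlag Gi T) := by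
  rintro x ⟨_, hx⟩ y ⟨_, hy⟩
  exact ⟨1, by rw [hx]; exact mem_rcoset_self _ 1, by rw [hy]; exact mem_rcoset_self _ 1⟩

lemma typ_image_stdFlag (T : Set (Fin n)) :
    (cosetGeometry Gi).typ '' (stdFlag Gi T) = T := by
  ext i
  constructor
  · rintro ⟨x, ⟨hx, -⟩, rfl⟩
    exact hx
  · intro hi
    exact ⟨elt Gi i 1, ⟨hi, rfl⟩, rfl⟩

/-- Every flag of the coset geometry has a common point (uses flag transitivity). -/
lemma flag_common_point (hft : GFlagTransitive Gi) {F : Set (CosetElt Gi)}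
    (hF : (cosetGeometry Gi).IsFlag F) : ∃ a : G, ∀ x ∈ F, a ∈ x.1.2 := by
  obtain ⟨a, ha⟩ := hft (stdFlag Gi ((cosetGeometry Gi).typ '' F)) F
    (stdFlag_isFlag _) hF (typ_image_stdFlag _)
  refine ⟨a, fun x hx => ?_⟩
  rw [← ha] at hx
  obtain ⟨y, ⟨-, hy2⟩, rfl⟩ := hx
  show a ∈ (fun x : G => x * a) '' y.1.2
  rw [hy2, rcoset_image_mul, one_mul]
  exact mem_rcoset_self _ a

lemma mem_GJ_iff {J : Finset (Fin n)} {a : G} :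
    a ∈ (⨅ j ∈ J, Gi j) ↔ ∀ j ∈ J, a ∈ Gi j := by
  simp [Subgroup.mem_iInf]

/-- The residue of the standard flag of type `J`. -/
abbrev resSet (Gi : Fin n → Subgroup G) (J : Finset (Fin n)) : Set (CosetElt Gi) :=
  (cosetGeometry Gi).res (stdFlag Gi ↑J)

/-- The edge relation of the incidence graph restricted to the residue. -/
abbrev stepRel (Gi : Fin n → Subgroup G) (J : Finset (Fin n)) :
    CosetElt Gi → CosetElt Gi → Prop := fun a b =>
  a ∈ resSet Gi J ∧ b ∈ resSet Gi J ∧ a ≠ b ∧ (cosetGeometry Gi).inc a b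

lemma stepRel_symm {J : Finset (Fin n)} : Symmetric (stepRel Gi J) := by
  rintro a b ⟨h1, h2, h3, h4⟩
  exact ⟨h2, h1, h3.symm, (cosetGeometry Gi).inc_symm _ _ h4⟩

lemma elt_mem_res {J : Finset (Fin n)} {k : Fin n} (hk : k ∉ J) {a : G}
    (ha : a ∈ ⨅ j ∈ J, Gi j) : elt Gi k a ∈ resSet Gi J := by
  refine ⟨?_, ?_⟩
  · rintro ⟨hmem, -⟩
    exact hk (by exact_mod_cast hmem)
  · rintro f ⟨hf1, hf2⟩
    refine ⟨a, mem_rcoset_self _ a, ?_⟩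
    rw [hf2]
    exact mem_rcoset_one.2 (mem_GJ_iff.1 ha _ (by exact_mod_cast hf1))

lemma typ_not_mem_of_res {J : Finset (Fin n)} {x : CosetElt Gi}
    (hx : x ∈ resSet Gi J) : x.1.1 ∉ J := by
  intro hmem
  have hf : elt Gi x.1.1 1 ∈ stdFlag Gi ↑J := ⟨by exact_mod_cast hmem, rfl⟩
  have hinc := hx.2 _ hf
  have heq := (cosetGeometry Gi).eq_of_inc_of_typ_eq _ _ hinc rfl
  exact hx.1 (by rw [heq]; exact hf)

lemma res_rep (hft : GFlagTransitive Gi) {J : Finset (Fin n)} {x : CosetElt Gi}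
    (hx : x ∈ resSet Gi J) : ∃ a : G, a ∈ (⨅ j ∈ J, Gi j) ∧ a ∈ x.1.2 := by
  have hflag : (cosetGeometry Gi).IsFlag (insert x (stdFlag Gi ↑J)) := by
    intro u hu v hv
    rcases Set.mem_insert_iff.1 hu with hux | hu
    · rcases Set.mem_insert_iff.1 hv with hvx | hv
      · rw [hux, hvx]; exact (cosetGeometry Gi).inc_refl x
      · rw [hux]; exact hx.2 _ hv
    · rcases Set.mem_insert_iff.1 hv with hvx | hv
      · rw [hvx]; exact (cosetGeometry Gi).inc_symm _ _ (hx.2 _ hu)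
      · exact stdFlag_isFlag _ _ hu _ hv
  obtain ⟨a, ha⟩ := flag_common_point hft hflag
  refine ⟨a, mem_GJ_iff.2 fun j hj => ?_, ha x (Set.mem_insert _ _)⟩
  have := ha (elt Gi j 1) (Set.mem_insert_of_mem _ ⟨by exact_mod_cast hj, rfl⟩)
  exact mem_rcoset_one.1 this

lemma edge_common (hft : GFlagTransitive Gi) {J : Finset (Fin n)} {x y : CosetElt Gi}
    (hx : x ∈ resSet Gi J) (hy : y ∈ resSet Gi J) (hinc : (cosetGeometry Gi).inc x y) :
    ∃ c : G, c ∈ (⨅ j ∈ J, Gi j) ∧ c ∈ x.1.2 ∧ c ∈ y.1.2 := by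
  have hflag : (cosetGeometry Gi).IsFlag (insert x (insert y (stdFlag Gi ↑J))) := by
    intro u hu v hv
    simp only [Set.mem_insert_iff] at hu hv
    rcases hu with hux | huy | hu
    · rcases hv with hvx | hvy | hv
      · rw [hux, hvx]; exact (cosetGeometry Gi).inc_refl x
      · rw [hux, hvy]; exact hinc
      · rw [hux]; exact hx.2 _ hv
    · rcases hv with hvx | hvy | hv
      · rw [huy, hvx]; exact (cosetGeometry Gi).inc_symm _ _ hinc
      · rw [huy, hvy]; exact (cosetGeometry Gi).inc_refl y
      · rw [huy]; exact hy.2 _ hv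
    · rcases hv with hvx | hvy | hv
      · rw [hvx]; exact (cosetGeometry Gi).inc_symm _ _ (hx.2 _ hu)
      · rw [hvy]; exact (cosetGeometry Gi).inc_symm _ _ (hy.2 _ hu)
      · exact stdFlag_isFlag _ _ hu _ hv
  obtain ⟨c, hc⟩ := flag_common_point hft hflag
  refine ⟨c, mem_GJ_iff.2 fun j hj => ?_, hc x (Set.mem_insert _ _),
    hc y (Set.mem_insert_of_mem _ (Set.mem_insert _ _))⟩
  have := hc (elt Gi j 1)
    (Set.mem_insert_of_mem _ (Set.mem_insert_of_mem _ ⟨by exact_mod_cast hj, rfl⟩))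
  exact mem_rcoset_one.1 this

lemma mem_D {J : Finset (Fin n)} {k : Fin n} (hk : k ∉ J) {u : G} (hu1 : u ∈ Gi k)
    (hu2 : u ∈ ⨅ j ∈ J, Gi j) : u ∈ ⨆ k ∈ Jᶜ, ⨅ j ∈ insert k J, Gi j := by
  have hmem : u ∈ ⨅ j ∈ insert k J, Gi j := by
    refine mem_GJ_iff.2 fun j hj => ?_
    rcases Finset.mem_insert.1 hj with rfl | hj
    · exact hu1
    · exact mem_GJ_iff.1 hu2 _ hj
  exact (le_iSup₂ (f := fun k (_ : k ∈ Jᶜ) => ⨅ j ∈ insert k J, Gi j) k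
    (Finset.mem_compl.2 hk)) hmem

lemma path_invariant (hft : GFlagTransitive Gi) {J : Finset (Fin n)} {x y : CosetElt Gi}
    (hpath : ReflTransGen (stepRel Gi J) x y) (hxS : x ∈ resSet Gi J) :
    ∀ a b : G, a ∈ (⨅ j ∈ J, Gi j) → a ∈ x.1.2 → b ∈ (⨅ j ∈ J, Gi j) → b ∈ y.1.2 →
      a * b⁻¹ ∈ ⨆ k ∈ Jᶜ, ⨅ j ∈ insert k J, Gi j := by
  induction hpath with
  | refl =>
    intro a b ha hax hb hbx
    obtain ⟨g, hg⟩ := x.2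
    exact mem_D (typ_not_mem_of_res hxS)
      (mul_inv_mem_of_rcoset (hg ▸ hax) (hg ▸ hbx))
      (Subgroup.mul_mem _ ha (Subgroup.inv_mem _ hb))
  | @tail z w hp e ih =>
    intro a b ha hax hb hbw
    obtain ⟨hzS, hwS, hne, hinc⟩ := e
    obtain ⟨c, hc, hcz, hcw⟩ := edge_common hft hzS hwS hinc
    have h1 := ih a c ha hax hc hcz
    have h2 : c * b⁻¹ ∈ ⨆ k ∈ Jᶜ, ⨅ j ∈ insert k J, Gi j := by
      obtain ⟨g, hg⟩ := w.2
      exact mem_D (typ_not_mem_of_res hwS)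
        (mul_inv_mem_of_rcoset (hg ▸ hcw) (hg ▸ hbw))
        (Subgroup.mul_mem _ hc (Subgroup.inv_mem _ hb))
    have h3 := Subgroup.mul_mem _ h1 h2
    rwa [show a * c⁻¹ * (c * b⁻¹) = a * b⁻¹ by group] at h3

lemma pathA {J : Finset (Fin n)} {k l : Fin n} (hk : k ∉ J) (hl : l ∉ J) {c : G}
    (hc : c ∈ ⨅ j ∈ J, Gi j) :
    ReflTransGen (stepRel Gi J) (elt Gi k c) (elt Gi l c) := by
  rcases eq_or_ne k l with rfl | hne
  · exact ReflTransGen.refl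
  · refine ReflTransGen.single ⟨elt_mem_res hk hc, elt_mem_res hl hc, ?_, ?_⟩
    · intro h
      exact hne (congrArg (fun x : CosetElt Gi => x.1.1) h)
    · exact ⟨c, mem_rcoset_self _ c, mem_rcoset_self _ c⟩

lemma rmul_elt (a : G) (k : Fin n) (g : G) :
    rmul Gi a (elt Gi k g) = elt Gi k (g * a) :=
  eltExt rfl (rcoset_image_mul _ _ _)

lemma rmul_rmul (a b : G) (x : CosetElt Gi) :
    rmul Gi b (rmul Gi a x) = rmul Gi (a * b) x := by
  obtain ⟨k, g, rfl⟩ := eq_elt x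
  rw [rmul_elt, rmul_elt, rmul_elt, mul_assoc]

lemma rmul_one (x : CosetElt Gi) : rmul Gi 1 x = x := by
  obtain ⟨k, g, rfl⟩ := eq_elt x
  rw [rmul_elt, mul_one]

lemma rmul_injective (a : G) : Function.Injective (rmul Gi a) := by
  intro x y h
  have h2 := congrArg (rmul Gi a⁻¹) h
  rwa [rmul_rmul, rmul_rmul, mul_inv_cancel, rmul_one, rmul_one] at h2

lemma rmul_inc (a : G) (x y : CosetElt Gi) :
    (cosetGeometry Gi).inc (rmul Gi a x) (rmul Gi a y) ↔ (cosetGeometry Gi).inc x y := by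
  show ((fun g : G => g * a) '' x.1.2 ∩ (fun g : G => g * a) '' y.1.2).Nonempty ↔ _
  rw [← Set.image_inter (mul_left_injective a)]
  exact Set.image_nonempty

lemma res_rmul_image (a : G) (F : Set (CosetElt Gi)) :
    (cosetGeometry Gi).res (rmul Gi a '' F) = rmul Gi a '' (cosetGeometry Gi).res F := by
  ext x
  obtain ⟨x', rfl⟩ : ∃ x', x = rmul Gi a x' :=
    ⟨rmul Gi a⁻¹ x, by rw [rmul_rmul, inv_mul_cancel, rmul_one]⟩
  constructor
  · rintro ⟨h1, h2⟩
    refine ⟨x', ⟨fun hx' => h1 ⟨x', hx', rfl⟩, fun f hf => ?_⟩, rfl⟩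
    exact (rmul_inc a x' f).1 (h2 _ ⟨f, hf, rfl⟩)
  · rintro ⟨x'', ⟨h1, h2⟩, heq⟩
    have hxx : x'' = x' := rmul_injective a heq
    rw [hxx] at h1 h2
    refine ⟨?_, ?_⟩
    · rintro ⟨f, hf, hfe⟩
      obtain rfl := rmul_injective a hfe
      exact h1 hf
    · rintro f ⟨f', hf', rfl⟩
      exact (rmul_inc a x' f').2 (h2 _ hf')

lemma connectedOn_rmul_image (a : G) {S : Set (CosetElt Gi)}
    (h : (cosetGeometry Gi).ConnectedOn S) :
    (cosetGeometry Gi).ConnectedOn (rmul Gi a '' S) := by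
  obtain ⟨⟨x0, hx0⟩, hconn⟩ := h
  refine ⟨⟨rmul Gi a x0, ⟨x0, hx0, rfl⟩⟩, ?_⟩
  rintro x ⟨x', hx', rfl⟩ y ⟨y', hy', rfl⟩
  refine ReflTransGen.lift (p := fun u v : CosetElt Gi => u ∈ rmul Gi a '' S ∧ v ∈ rmul Gi a '' S ∧ u ≠ v ∧ (cosetGeometry Gi).inc u v) (rmul Gi a) ?_ _ _ (hconn x' hx' y' hy')
  rintro u v ⟨h1, h2, h3, h4⟩
  exact ⟨⟨u, h1, rfl⟩, ⟨v, h2, rfl⟩, fun he => h3 (rmul_injective a he),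
    (rmul_inc a u v).2 h4⟩

lemma stepRel_rmul (hft : GFlagTransitive Gi) {J : Finset (Fin n)} {e : G}
    (he : e ∈ ⨅ j ∈ J, Gi j) {u v : CosetElt Gi} (h : stepRel Gi J u v) :
    stepRel Gi J (rmul Gi e u) (rmul Gi e v) := by
  obtain ⟨h1, h2, h3, h4⟩ := h
  have key : ∀ w : CosetElt Gi, w ∈ resSet Gi J → rmul Gi e w ∈ resSet Gi J := by
    intro w hw
    obtain ⟨c, hc, hcw⟩ := res_rep hft hw
    have hw' : w = elt Gi w.1.1 c := eq_elt_of_mem hcw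
    rw [hw', rmul_elt]
    exact elt_mem_res (typ_not_mem_of_res hw) (Subgroup.mul_mem _ hc he)
  exact ⟨key u h1, key v h2, fun heq => h3 (rmul_injective e heq), (rmul_inc e u v).2 h4⟩

/-- The subgroup of `d ∈ G_J` such that `G_{k₀} d` is connected to `G_{k₀}` in the residue. -/
def pathSubgroup (hft : GFlagTransitive Gi) (J : Finset (Fin n)) (k₀ : Fin n)
    (hk₀ : k₀ ∉ J) : Subgroup G where
  carrier := {d : G | d ∈ (⨅ j ∈ J, Gi j) ∧
    ReflTransGen (stepRel Gi J) (elt Gi k₀ d) (elt Gi k₀ 1)}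
  one_mem' := ⟨Subgroup.one_mem _, ReflTransGen.refl⟩
  mul_mem' := by
    rintro d e ⟨hd1, hd2⟩ ⟨he1, he2⟩
    refine ⟨Subgroup.mul_mem _ hd1 he1, ?_⟩
    have t1 : ReflTransGen (stepRel Gi J) (rmul Gi e (elt Gi k₀ d)) (rmul Gi e (elt Gi k₀ 1)) := ReflTransGen.lift (p := stepRel Gi J) (rmul Gi e) (fun u v h => stepRel_rmul hft he1 h) _ _ hd2
    rw [rmul_elt, rmul_elt, one_mul] at t1
    exact t1.trans he2
  inv_mem' := by
    rintro d ⟨hd1, hd2⟩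
    refine ⟨Subgroup.inv_mem _ hd1, ?_⟩
    have hd1' : d⁻¹ ∈ (⨅ j ∈ J, Gi j) := Subgroup.inv_mem _ hd1
    have t1 : ReflTransGen (stepRel Gi J) (rmul Gi d⁻¹ (elt Gi k₀ d)) (rmul Gi d⁻¹ (elt Gi k₀ 1)) := ReflTransGen.lift (p := stepRel Gi J) (rmul Gi d⁻¹) (fun u v h => stepRel_rmul hft hd1' h) _ _ hd2
    rw [rmul_elt, rmul_elt, mul_inv_cancel, one_mul] at t1
    haveI : Std.Symm (stepRel Gi J) := ⟨fun a b h => stepRel_symm h⟩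
    exact Std.Symm.symm _ _ t1

lemma mem_pathSubgroup_iff {hft : GFlagTransitive Gi} {J : Finset (Fin n)} {k₀ : Fin n}
    {hk₀ : k₀ ∉ J} {d : G} : d ∈ pathSubgroup hft J k₀ hk₀ ↔
      d ∈ (⨅ j ∈ J, Gi j) ∧ ReflTransGen (stepRel Gi J) (elt Gi k₀ d) (elt Gi k₀ 1) :=
  Iff.rfl

lemma generators_le_pathSubgroup (hft : GFlagTransitive Gi) {J : Finset (Fin n)}
    {k₀ : Fin n} (hk₀ : k₀ ∉ J) (k : Fin n) (hk : k ∈ Jᶜ) :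
    (⨅ j ∈ insert k J, Gi j) ≤ pathSubgroup hft J k₀ hk₀ := by
  intro u hu
  have hk' : k ∉ J := Finset.mem_compl.1 hk
  have hu1 : u ∈ Gi k := mem_GJ_iff.1 hu _ (Finset.mem_insert_self _ _)
  have hu2 : u ∈ ⨅ j ∈ J, Gi j :=
    mem_GJ_iff.2 fun j hj => mem_GJ_iff.1 hu _ (Finset.mem_insert_of_mem hj)
  refine mem_pathSubgroup_iff.2 ⟨hu2, ?_⟩
  have p1 : ReflTransGen (stepRel Gi J) (elt Gi k₀ u) (elt Gi k u) := pathA hk₀ hk' hu2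
  have heq : elt Gi k u = elt Gi k 1 := elt_eq_of_mem (mem_rcoset_one.2 hu1)
  have p2 : ReflTransGen (stepRel Gi J) (elt Gi k u) (elt Gi k₀ 1) := by
    rw [heq]
    exact pathA hk' hk₀ (Subgroup.one_mem _)
  exact p1.trans p2

lemma connectedOn_std (hft : GFlagTransitive Gi) (J : Finset (Fin n))
    (hgen : (⨅ j ∈ J, Gi j) ≤ ⨆ k ∈ Jᶜ, ⨅ j ∈ insert k J, Gi j)
    {i₀ : Fin n} (hi₀ : i₀ ∉ J) :
    (cosetGeometry Gi).ConnectedOn (resSet Gi J) := by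
  refine ⟨⟨elt Gi i₀ 1, elt_mem_res hi₀ (Subgroup.one_mem _)⟩, ?_⟩
  intro x hx y hy
  obtain ⟨a, ha, hax⟩ := res_rep hft hx
  obtain ⟨b, hb, hby⟩ := res_rep hft hy
  have hkJ := typ_not_mem_of_res hx
  have hlJ := typ_not_mem_of_res hy
  have hxe : x = elt Gi x.1.1 a := eq_elt_of_mem hax
  have hye : y = elt Gi y.1.1 b := eq_elt_of_mem hby
  have hKa : a ∈ pathSubgroup hft J x.1.1 hkJ :=
    (iSup₂_le fun k hk => generators_le_pathSubgroup hft hkJ k hk) (hgen ha)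
  have hKb : b ∈ pathSubgroup hft J y.1.1 hlJ :=
    (iSup₂_le fun k hk => generators_le_pathSubgroup hft hlJ k hk) (hgen hb)
  have p1 := (mem_pathSubgroup_iff.1 hKa).2
  have p2 : ReflTransGen (stepRel Gi J) (elt Gi x.1.1 1) (elt Gi y.1.1 1) :=
    pathA hkJ hlJ (Subgroup.one_mem _)
  have p3 : ReflTransGen (stepRel Gi J) (elt Gi y.1.1 b) (elt Gi y.1.1 1) → ReflTransGen (stepRel Gi J) (elt Gi y.1.1 1) (elt Gi y.1.1 b) := by
    haveI : Std.Symm (stepRel Gi J) := ⟨fun a b h => stepRel_symm h⟩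
    exact Std.Symm.symm _ _
  replace p3 := p3 (mem_pathSubgroup_iff.1 hKb).2
  rw [hxe, hye]
  exact (p1.trans p2).trans p3

end Dehon

end Dehon

/-- Theorem 3.2 (Dehon): group-theoretic criterion for residual connectedness. -/
theorem stmt_10 {G : Type*} [Group G] {n : ℕ} (Gi : Fin n → Subgroup G)
    (hft : GFlagTransitive Gi) :
    (cosetGeometry Gi).ResiduallyConnected ↔
      ∀ J : Finset (Fin n), J.card + 2 ≤ n →
        (⨅ j ∈ J, Gi j) = ⨆ k ∈ Jᶜ, (⨅ j ∈ insert k J, Gi j) := by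
  classical
  constructor
  · intro hres J hJ
    have hcard : 1 < Jᶜ.card := by
      have h1 := Finset.card_compl (α := Fin n) J
      rw [Fintype.card_fin] at h1
      omega
    obtain ⟨i, hi, j, hj, hij⟩ := Finset.one_lt_card.1 hcard
    have hiJ : i ∉ J := Finset.mem_compl.1 hi
    have hjJ : j ∉ J := Finset.mem_compl.1 hj
    have hcond : ∃ i' j' : Fin n, i' ≠ j' ∧
        i' ∉ (cosetGeometry Gi).typ '' (Dehon.stdFlag Gi ↑J) ∧
        j' ∉ (cosetGeometry Gi).typ '' (Dehon.stdFlag Gi ↑J) := by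
      refine ⟨i, j, hij, ?_, ?_⟩ <;> rw [Dehon.typ_image_stdFlag]
      · exact fun h => hiJ (by exact_mod_cast h)
      · exact fun h => hjJ (by exact_mod_cast h)
    obtain ⟨-, hconn⟩ := hres _ (Dehon.stdFlag_isFlag ↑J) hcond
    refine le_antisymm ?_ ?_
    · intro a ha
      have hx := Dehon.elt_mem_res hiJ ha
      have hy := Dehon.elt_mem_res hiJ (Subgroup.one_mem (⨅ j ∈ J, Gi j))
      have hpath := hconn _ hx _ hy
      have hinv := Dehon.path_invariant hft hpath hx a 1 ha (mem_rcoset_self _ a)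
        (Subgroup.one_mem _) (mem_rcoset_self _ 1)
      simpa using hinv
    · exact iSup₂_le fun k _ => biInf_mono fun j hj => Finset.mem_insert_of_mem hj
  · rintro hsub F hF ⟨i, j, hij, hi, hj⟩
    set T : Set (Fin n) := (cosetGeometry Gi).typ '' F with hT
    have hTfin : T.Finite := Set.toFinite T
    set J : Finset (Fin n) := hTfin.toFinset with hJdef
    have hJT : (↑J : Set (Fin n)) = T := hTfin.coe_toFinset
    have hiJ : i ∉ J := fun h => hi (hTfin.mem_toFinset.1 h)
    have hjJ : j ∉ J := fun h => hj (hTfin.mem_toFinset.1 h)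
    have hcard : J.card + 2 ≤ n := by
      have hsubset : J ⊆ ({i, j} : Finset (Fin n))ᶜ := by
        intro l hl
        rw [Finset.mem_compl, Finset.mem_insert, Finset.mem_singleton]
        rintro (rfl | rfl)
        · exact hiJ hl
        · exact hjJ hl
      have h1 := Finset.card_le_card hsubset
      have h2 : ({i, j} : Finset (Fin n)).card = 2 := Finset.card_pair hij
      have h3 := Finset.card_compl ({i, j} : Finset (Fin n))
      have h4 := Finset.card_le_univ ({i, j} : Finset (Fin n))
      rw [Fintype.card_fin] at h3 h4
      omega
    have hgen := hsub J hcard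
    obtain ⟨γ, hγ⟩ := hft (Dehon.stdFlag Gi ↑J) F (Dehon.stdFlag_isFlag _) hF
      (by rw [Dehon.typ_image_stdFlag, hJT])
    have hconn0 := Dehon.connectedOn_std hft J (le_of_eq hgen) hiJ
    rw [← hγ, Dehon.res_rmul_image]
    exact Dehon.connectedOn_rmul_image γ hconn0
end

section
/- (Buekenhout–Hermand.) Let G be a group with subgroups (G_i)_{i∈I}, I finite, and let α be a function from the nonempty subsets of I to I with α(J) ∈ J for every nonempty J ⊆ I. Then the coset geometry Γ(G;(G_i)_{i∈I}) is flag-transitive under the right-multiplication action of G if and only if for every J ⊆ I with |J| ≥ 3, ∩_{j ∈ J \ {α(J)}} (G_j G_{α(J)}) = ( ∩_{j ∈ J \ {α(J)}} G_j ) G_{α(J)}, where products of subgroups are taken as subsets of G. -/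
open Pointwise

section Aux

variable {G : Type*} [Group G] {ι : Type*} [Fintype ι] [DecidableEq ι]

/-- Key induction: a pairwise-intersecting family of cosets has a common element,
given the Buekenhout–Hermand intersection condition. -/
private lemma common_point (Gi : ι → Subgroup G) (α : Finset ι → ι)
    (hα : ∀ J : Finset ι, J.Nonempty → α J ∈ J)
    (h : ∀ J : Finset ι, 3 ≤ J.card →
        (⋂ j ∈ J.erase (α J), ((Gi j : Set G) * (Gi (α J) : Set G))) =
          (⋂ j ∈ J.erase (α J), (Gi j : Set G)) * (Gi (α J) : Set G))
    (T : Finset ι) :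
    ∀ c : ι → G,
      (∀ j ∈ T, ∀ k ∈ T, ((rcoset (Gi j) (c j)) ∩ (rcoset (Gi k) (c k))).Nonempty) →
      ∃ x : G, ∀ j ∈ T, x ∈ rcoset (Gi j) (c j) := by
  induction T using Finset.strongInduction with
  | _ T ih =>
    intro c hc
    by_cases h3 : 3 ≤ T.card
    · have hiT : α T ∈ T := hα T (Finset.card_pos.mp (by omega))
      set T' := T.erase (α T) with hT'def
      have hsub : T' ⊂ T := Finset.erase_ssubset hiT
      obtain ⟨y, hy⟩ := ih T' hsub c
        (fun j hj k hk => hc j (Finset.mem_of_mem_erase hj) k (Finset.mem_of_mem_erase hk))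
      have hmem : y * (c (α T))⁻¹ ∈ ⋂ j ∈ T', ((Gi j : Set G) * (Gi (α T) : Set G)) := by
        refine Set.mem_iInter₂.mpr fun j hj => ?_
        obtain ⟨z, hz1, hz2⟩ := hc j (Finset.mem_of_mem_erase hj) (α T) hiT
        refine ⟨y * z⁻¹, ?_, z * (c (α T))⁻¹, hz2, by group⟩
        have h1 : y * (c j)⁻¹ ∈ Gi j := hy j hj
        have h2 : z * (c j)⁻¹ ∈ Gi j := hz1
        have he : (y * (c j)⁻¹) * (z * (c j)⁻¹)⁻¹ = y * z⁻¹ := by group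
        exact he ▸ (Gi j).mul_mem h1 ((Gi j).inv_mem h2)
      rw [h T h3] at hmem
      obtain ⟨h0, hh0, k0, hk0, heq0⟩ := hmem
      have heq : h0 * k0 = y * (c (α T))⁻¹ := heq0
      refine ⟨h0⁻¹ * y, fun j hj => ?_⟩
      rcases eq_or_ne j (α T) with hji | hji
      · rw [hji]
        show h0⁻¹ * y * (c (α T))⁻¹ ∈ Gi (α T)
        have he : h0⁻¹ * y * (c (α T))⁻¹ = h0⁻¹ * (y * (c (α T))⁻¹) := by group
        rw [he, ← heq]
        have he2 : h0⁻¹ * (h0 * k0) = k0 := by group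
        rw [he2]; exact hk0
      · have hjT' : j ∈ T' := Finset.mem_erase.mpr ⟨hji, hj⟩
        have h1 : y * (c j)⁻¹ ∈ Gi j := hy j hjT'
        have h2 : h0⁻¹ ∈ Gi j := (Gi j).inv_mem (Set.mem_iInter₂.mp hh0 j hjT')
        show h0⁻¹ * y * (c j)⁻¹ ∈ Gi j
        have he : h0⁻¹ * y * (c j)⁻¹ = h0⁻¹ * (y * (c j)⁻¹) := by group
        rw [he]; exact (Gi j).mul_mem h2 h1
    · obtain h0 | h1 | h2 : T.card = 0 ∨ T.card = 1 ∨ T.card = 2 := by omega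
      · refine ⟨1, fun j hj => ?_⟩
        rw [Finset.card_eq_zero] at h0; simp [h0] at hj
      · obtain ⟨j0, rfl⟩ := Finset.card_eq_one.mp h1
        exact ⟨c j0, fun j hj => by
          rw [Finset.mem_singleton] at hj; subst hj; exact mem_rcoset_self _ _⟩
      · obtain ⟨j0, k0, hjk, rfl⟩ := Finset.card_eq_two.mp h2
        obtain ⟨x, hx1, hx2⟩ := hc j0 (by simp) k0 (by simp)
        refine ⟨x, fun j hj => ?_⟩
        rcases Finset.mem_insert.mp hj with rfl | hj
        · exact hx1
        · rw [Finset.mem_singleton] at hj; subst hj; exact hx2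

/-- Any flag admits a representative function for its cosets. -/
private lemma flag_repr (Gi : ι → Subgroup G) (S : Set (CosetElt Gi))
    (hS : (cosetGeometry Gi).IsFlag S) :
    ∃ c : ι → G, ∀ p ∈ S, p.1.2 = rcoset (Gi p.1.1) (c p.1.1) := by
  have hj : ∀ j : ι, ∃ g : G, ∀ p ∈ S, p.1.1 = j → p.1.2 = rcoset (Gi j) g := by
    intro j
    by_cases hex : ∃ p ∈ S, p.1.1 = j
    · obtain ⟨p, hp, hpj⟩ := hex
      obtain ⟨g, hg⟩ := p.2
      refine ⟨g, fun q hq hqj => ?_⟩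
      have hqp : q = p := (cosetGeometry Gi).eq_of_inc_of_typ_eq q p (hS q hq p hp)
        (hqj.trans hpj.symm)
      rw [hqp, hg, hpj]
    · exact ⟨1, fun q hq hqj => absurd ⟨q, hq, hqj⟩ hex⟩
  choose c hc using hj
  exact ⟨c, fun p hp => hc p.1.1 p hp rfl⟩

end Aux

/-- Theorem 3.5 (Buekenhout–Hermand): criterion for flag-transitivity. -/
theorem stmt_13 {G : Type*} [Group G] {ι : Type*} [Fintype ι] [DecidableEq ι]
    (Gi : ι → Subgroup G) (α : Finset ι → ι)
    (hα : ∀ J : Finset ι, J.Nonempty → α J ∈ J) :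
    GFlagTransitive Gi ↔
      ∀ J : Finset ι, 3 ≤ J.card →
        (⋂ j ∈ J.erase (α J), ((Gi j : Set G) * (Gi (α J) : Set G))) =
          (⋂ j ∈ J.erase (α J), (Gi j : Set G)) * (Gi (α J) : Set G) := by
  constructor
  · -- flag-transitivity implies the intersection condition
    intro hft J hJ
    have hiJ : α J ∈ J := hα J (Finset.card_pos.mp (by omega))
    set i := α J with hidef
    apply Set.Subset.antisymm
    · intro y hy
      classical
      set elt : ι → G → CosetElt Gi := fun j g => ⟨(j, rcoset (Gi j) g), g, rfl⟩ with heltdef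
      set c : ι → G := fun j => if j = i then 1 else y with hcdef
      set F : Set (CosetElt Gi) := (fun j => elt j (c j)) '' ↑J with hFdef
      set F' : Set (CosetElt Gi) := (fun j => elt j 1) '' ↑J with hF'def
      have hmeet : ∀ j ∈ J, j ≠ i → (rcoset (Gi j) y ∩ rcoset (Gi i) 1).Nonempty := by
        intro j hj hji
        obtain ⟨a, ha, b, hb, hab0⟩ := Set.mem_iInter₂.mp hy j (Finset.mem_erase.mpr ⟨hji, hj⟩)
        have hab : a * b = y := hab0
        refine ⟨b, ?_, ?_⟩
        · show b * y⁻¹ ∈ Gi j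
          have he : b * y⁻¹ = a⁻¹ * ((a * b) * y⁻¹) := by group
          rw [he, hab]
          simpa using (Gi j).inv_mem ha
        · show b * 1⁻¹ ∈ Gi i
          simpa using hb
      have hpair : ∀ j ∈ J, ∀ k ∈ J,
          (rcoset (Gi j) (c j) ∩ rcoset (Gi k) (c k)).Nonempty := by
        intro j hj k hk
        rcases eq_or_ne j i with rfl | hji <;> rcases eq_or_ne k i with rfl | hki
        · simp only [hcdef, if_pos rfl]
          exact ⟨1, mem_rcoset_self _ _, mem_rcoset_self _ _⟩
        · obtain ⟨z, hz1, hz2⟩ := hmeet k hk hki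
          simp only [hcdef, if_pos rfl, if_neg hki]
          exact ⟨z, hz2, hz1⟩
        · obtain ⟨z, hz1, hz2⟩ := hmeet j hj hji
          simp only [hcdef, if_pos rfl, if_neg hji]
          exact ⟨z, hz1, hz2⟩
        · simp only [hcdef, if_neg hji, if_neg hki]
          exact ⟨y, mem_rcoset_self _ _, mem_rcoset_self _ _⟩
      have hflagF : (cosetGeometry Gi).IsFlag F := by
        rintro p ⟨j, hj, rfl⟩ q ⟨k, hk, rfl⟩
        exact hpair j hj k hk
      have hflagF' : (cosetGeometry Gi).IsFlag F' := by
        rintro p ⟨j, hj, rfl⟩ q ⟨k, hk, rfl⟩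
        exact ⟨1, mem_rcoset_self _ _, mem_rcoset_self _ _⟩
      have htypF : (cosetGeometry Gi).typ '' F = ↑J := by
        rw [hFdef, Set.image_image]
        exact Set.image_id _
      have htypF' : (cosetGeometry Gi).typ '' F' = ↑J := by
        rw [hF'def, Set.image_image]
        exact Set.image_id _
      obtain ⟨a, ha⟩ := hft F' F hflagF' hflagF (htypF'.trans htypF.symm)
      have key : ∀ j ∈ J, rcoset (Gi j) (c j) = rcoset (Gi j) a := by
        intro j hj
        have hmem : rmul Gi a (elt j 1) ∈ F := by
          rw [← ha]
          exact ⟨elt j 1, ⟨j, hj, rfl⟩, rfl⟩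
        obtain ⟨k, hk, heq⟩ := hmem
        have hval := congrArg (fun p : CosetElt Gi => p.1) heq
        simp only [rmul, heltdef] at hval
        obtain ⟨hkj, hcos⟩ := Prod.mk.injEq .. ▸ hval
        subst hkj
        rw [hcos, rcoset_image_mul, one_mul]
      have haGi : a ∈ Gi i := by
        have := key i hiJ
        simp only [hcdef, if_pos rfl] at this
        have h1 : a ∈ rcoset (Gi i) a := mem_rcoset_self _ _
        rw [← this] at h1
        have h2 : a * 1⁻¹ ∈ Gi i := h1
        simpa using h2
      refine ⟨y * a⁻¹, Set.mem_iInter₂.mpr fun j hj => ?_, a, haGi, by group⟩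
      obtain ⟨hji, hjJ⟩ := Finset.mem_erase.mp hj
      have hk := key j hjJ
      simp only [hcdef, if_neg hji] at hk
      have h1 : a ∈ rcoset (Gi j) a := mem_rcoset_self _ _
      rw [← hk] at h1
      have h2 : a * y⁻¹ ∈ Gi j := h1
      have he : y * a⁻¹ = (a * y⁻¹)⁻¹ := by group
      rw [he]
      exact (Gi j).inv_mem h2
    · rintro x ⟨a, ha, b, hb, rfl⟩
      exact Set.mem_iInter₂.mpr fun j hj =>
        ⟨a, Set.mem_iInter₂.mp ha j hj, b, hb, rfl⟩
  · -- the intersection condition implies flag-transitivity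
    intro h F F' hF hF' htyp
    classical
    obtain ⟨c, hcF⟩ := flag_repr Gi F hF
    obtain ⟨c', hcF'⟩ := flag_repr Gi F' hF'
    set T : Finset ι := Set.Finite.toFinset (Set.toFinite ((cosetGeometry Gi).typ '' F))
      with hTdef
    have hmemT : ∀ j : ι, j ∈ T ↔ ∃ p ∈ F, p.1.1 = j := by
      intro j
      rw [hTdef, Set.Finite.mem_toFinset]
      exact Iff.rfl
    have hmemT' : ∀ j : ι, j ∈ T ↔ ∃ p ∈ F', p.1.1 = j := by
      intro j
      rw [hTdef, Set.Finite.mem_toFinset, htyp]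
      exact Iff.rfl
    obtain ⟨x, hx⟩ := common_point Gi α hα h T c (by
      intro j hj k hk
      obtain ⟨p, hp, hpj⟩ := (hmemT j).mp hj
      obtain ⟨q, hq, hqk⟩ := (hmemT k).mp hk
      have hinc := hF p hp q hq
      have h1 : p.1.2 = rcoset (Gi j) (c j) := hpj ▸ hcF p hp
      have h2 : q.1.2 = rcoset (Gi k) (c k) := hqk ▸ hcF q hq
      have hinc2 : ((p.1.2 : Set G) ∩ q.1.2).Nonempty := hinc
      rw [h1, h2] at hinc2
      exact hinc2)
    obtain ⟨x', hx'⟩ := common_point Gi α hα h T c' (by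
      intro j hj k hk
      obtain ⟨p, hp, hpj⟩ := (hmemT' j).mp hj
      obtain ⟨q, hq, hqk⟩ := (hmemT' k).mp hk
      have hinc := hF' p hp q hq
      have h1 : p.1.2 = rcoset (Gi j) (c' j) := hpj ▸ hcF' p hp
      have h2 : q.1.2 = rcoset (Gi k) (c' k) := hqk ▸ hcF' q hq
      have hinc2 : ((p.1.2 : Set G) ∩ q.1.2).Nonempty := hinc
      rw [h1, h2] at hinc2
      exact hinc2)
    refine ⟨x⁻¹ * x', ?_⟩
    have hxF : ∀ p ∈ F, p.1.2 = rcoset (Gi p.1.1) x := by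
      intro p hp
      have h1 : x ∈ rcoset (Gi p.1.1) (c p.1.1) :=
        hx p.1.1 ((hmemT p.1.1).mpr ⟨p, hp, rfl⟩)
      rw [hcF p hp]
      exact (rcoset_eq_of_mem h1).symm
    have hxF' : ∀ q ∈ F', q.1.2 = rcoset (Gi q.1.1) x' := by
      intro q hq
      have h1 : x' ∈ rcoset (Gi q.1.1) (c' q.1.1) :=
        hx' q.1.1 ((hmemT' q.1.1).mpr ⟨q, hq, rfl⟩)
      rw [hcF' q hq]
      exact (rcoset_eq_of_mem h1).symm
    have hmap : ∀ p ∈ F, ∀ q ∈ F', p.1.1 = q.1.1 → rmul Gi (x⁻¹ * x') p = q := by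
      intro p hp q hq hpq
      apply Subtype.ext
      apply Prod.ext
      · exact hpq
      · show (fun g : G => g * (x⁻¹ * x')) '' p.1.2 = q.1.2
        rw [hxF p hp, rcoset_image_mul, mul_inv_cancel_left, hxF' q hq, hpq]
    apply Set.Subset.antisymm
    · rintro _ ⟨p, hp, rfl⟩
      have hj : (cosetGeometry Gi).typ p ∈ (cosetGeometry Gi).typ '' F' :=
        htyp ▸ ⟨p, hp, rfl⟩
      obtain ⟨q, hq, hqt⟩ := hj
      rw [hmap p hp q hq hqt.symm]
      exact hq
    · intro q hq
      have hj : (cosetGeometry Gi).typ q ∈ (cosetGeometry Gi).typ '' F :=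
        htyp.symm ▸ ⟨q, hq, rfl⟩
      obtain ⟨p, hp, hpt⟩ := hj
      exact ⟨p, hp, hmap p hp q hq hpt⟩
end

section
/- (Tits.) Let G_0, G_1, G_2 be three subgroups of a group G. Then the following three conditions are equivalent: (1) G_0G_1 ∩ G_0G_2 = G_0(G_1 ∩ G_2); (2) (G_0 ∩ G_1)(G_0 ∩ G_2) = (G_1G_2) ∩ G_0; (3) whenever three cosets G_0x, G_1y, G_2z have pairwise nonempty intersections, the triple intersection G_0x ∩ G_1y ∩ G_2z is nonempty. -/
open Pointwise

/-- Lemma 4.3 (Tits): three equivalent conditions on a triple of subgroups. -/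
theorem stmt_14 {G : Type*} [Group G] (G₀ G₁ G₂ : Subgroup G) :
    ((((G₀ : Set G) * (G₁ : Set G)) ∩ ((G₀ : Set G) * (G₂ : Set G)) =
        (G₀ : Set G) * ((G₁ : Set G) ∩ (G₂ : Set G))) ↔
      (((G₀ ⊓ G₁ : Subgroup G) : Set G) * ((G₀ ⊓ G₂ : Subgroup G) : Set G) =
        ((G₁ : Set G) * (G₂ : Set G)) ∩ (G₀ : Set G))) ∧
    ((((G₀ : Set G) * (G₁ : Set G)) ∩ ((G₀ : Set G) * (G₂ : Set G)) =
        (G₀ : Set G) * ((G₁ : Set G) ∩ (G₂ : Set G))) ↔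
      (∀ x y z : G,
        (rcoset G₀ x ∩ rcoset G₁ y).Nonempty →
        (rcoset G₀ x ∩ rcoset G₂ z).Nonempty →
        (rcoset G₁ y ∩ rcoset G₂ z).Nonempty →
        (rcoset G₀ x ∩ rcoset G₁ y ∩ rcoset G₂ z).Nonempty)) := by

  have triv : (G₀:Set G) * ((G₁:Set G) ∩ (G₂:Set G)) ⊆
      ((G₀:Set G)*(G₁:Set G)) ∩ ((G₀:Set G)*(G₂:Set G)) := by
    rintro x hx
    obtain ⟨a, ha, c, hc, rfl⟩ := Set.mem_mul.1 hx
    exact ⟨Set.mul_mem_mul ha hc.1, Set.mul_mem_mul ha hc.2⟩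
  constructor
  · constructor
    · -- (1) → (2)
      intro h1
      apply Set.Subset.antisymm
      · intro x hx
        obtain ⟨u, hu, v, hv, rfl⟩ := Set.mem_mul.1 hx
        exact ⟨Set.mul_mem_mul hu.2 hv.2, G₀.mul_mem hu.1 hv.1⟩
      · rintro g ⟨hg12, hg0⟩
        obtain ⟨a, ha, b, hb, rfl⟩ := Set.mem_mul.1 hg12
        have ha' : a ∈ ((G₀:Set G)*(G₁:Set G)) ∩ ((G₀:Set G)*(G₂:Set G)) := by
          refine ⟨Set.mem_mul.2 ⟨1, G₀.one_mem, a, ha, one_mul a⟩,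
            Set.mem_mul.2 ⟨a*b, hg0, b⁻¹, G₂.inv_mem hb, by group⟩⟩
        rw [h1] at ha'
        obtain ⟨h, hh, c, hc, hac⟩ := Set.mem_mul.1 ha'
        refine Set.mem_mul.2 ⟨h, ⟨hh, ?_⟩, c*b, ⟨?_, G₂.mul_mem hc.2 hb⟩,
          by rw [← mul_assoc, hac]⟩
        · have e : h = a * c⁻¹ := by rw [← hac]; group
          rw [e]; exact G₁.mul_mem ha (G₁.inv_mem hc.1)
        · have e : c * b = h⁻¹ * (a*b) := by rw [← hac]; group
          rw [e]; exact G₀.mul_mem (G₀.inv_mem hh) hg0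
    · -- (2) → (1)
      intro h2
      apply Set.Subset.antisymm _ triv
      rintro x ⟨hx1, hx2⟩
      obtain ⟨a, ha, b, hb, rfl⟩ := Set.mem_mul.1 hx1
      obtain ⟨a', ha', b', hb', hab'⟩ := Set.mem_mul.1 hx2
      have e : a⁻¹ * a' = b * b'⁻¹ := by
        have h : a * (b * b'⁻¹) = a' := by
          rw [← mul_assoc, ← hab']; group
        rw [← h]; group
      have key : a⁻¹ * a' ∈ ((G₁:Set G)*(G₂:Set G)) ∩ (G₀:Set G) := by
        refine ⟨Set.mem_mul.2 ⟨b, hb, b'⁻¹, G₂.inv_mem hb', e.symm⟩,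
          G₀.mul_mem (G₀.inv_mem ha) ha'⟩
      rw [← h2] at key
      obtain ⟨u, hu, v, hv, huv⟩ := Set.mem_mul.1 key
      have h3 : u * v = b * b'⁻¹ := huv.trans e
      have e2 : u⁻¹ * b = v * b' := by
        have hv' : v = u⁻¹ * (b * b'⁻¹) := by rw [← h3]; group
        rw [hv']; group
      refine Set.mem_mul.2 ⟨a*u, G₀.mul_mem ha hu.1, u⁻¹*b,
        ⟨G₁.mul_mem (G₁.inv_mem hu.2) hb, ?_⟩, by group⟩
      rw [e2]; exact G₂.mul_mem hv.2 hb'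
  · constructor
    · -- (1) → (3)
      intro h1 x y z h01 h02 h12
      obtain ⟨w1, hw1x, hw1y⟩ := h01
      obtain ⟨w2, hw2x, hw2z⟩ := h02
      obtain ⟨w3, hw3y, hw3z⟩ := h12
      have hw1x' : w1 * x⁻¹ ∈ G₀ := hw1x
      have hw1y' : w1 * y⁻¹ ∈ G₁ := hw1y
      have hw2x' : w2 * x⁻¹ ∈ G₀ := hw2x
      have hw2z' : w2 * z⁻¹ ∈ G₂ := hw2z
      have hw3y' : w3 * y⁻¹ ∈ G₁ := hw3y
      have hw3z' : w3 * z⁻¹ ∈ G₂ := hw3z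
      have hkey : x * w3⁻¹ ∈ ((G₀:Set G)*(G₁:Set G)) ∩ ((G₀:Set G)*(G₂:Set G)) := by
        constructor
        · refine Set.mem_mul.2 ⟨x * w1⁻¹, ?_, w1 * w3⁻¹, ?_, by group⟩
          · have e : x * w1⁻¹ = (w1 * x⁻¹)⁻¹ := by group
            rw [e]; exact G₀.inv_mem hw1x'
          · have e : w1 * w3⁻¹ = (w1 * y⁻¹) * (w3 * y⁻¹)⁻¹ := by group
            rw [e]; exact G₁.mul_mem hw1y' (G₁.inv_mem hw3y')
        · refine Set.mem_mul.2 ⟨x * w2⁻¹, ?_, w2 * w3⁻¹, ?_, by group⟩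
          · have e : x * w2⁻¹ = (w2 * x⁻¹)⁻¹ := by group
            rw [e]; exact G₀.inv_mem hw2x'
          · have e : w2 * w3⁻¹ = (w2 * z⁻¹) * (w3 * z⁻¹)⁻¹ := by group
            rw [e]; exact G₂.mul_mem hw2z' (G₂.inv_mem hw3z')
      rw [h1] at hkey
      obtain ⟨a, ha, d, hd, had⟩ := Set.mem_mul.1 hkey
      refine ⟨d * w3, ⟨?_, ?_⟩, ?_⟩
      · show (d * w3) * x⁻¹ ∈ G₀
        have hx : x = a * d * w3 := by rw [had]; group
        rw [hx]
        have e : d * w3 * (a * d * w3)⁻¹ = a⁻¹ := by group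
        rw [e]; exact G₀.inv_mem ha
      · show (d * w3) * y⁻¹ ∈ G₁
        have e : (d * w3) * y⁻¹ = d * (w3 * y⁻¹) := by group
        rw [e]; exact G₁.mul_mem hd.1 hw3y'
      · show (d * w3) * z⁻¹ ∈ G₂
        have e : (d * w3) * z⁻¹ = d * (w3 * z⁻¹) := by group
        rw [e]; exact G₂.mul_mem hd.2 hw3z'
    · -- (3) → (1)
      intro h3
      apply Set.Subset.antisymm _ triv
      rintro x ⟨hx1, hx2⟩
      obtain ⟨a, ha, b, hb, rfl⟩ := Set.mem_mul.1 hx1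
      obtain ⟨a', ha', b', hb', hab'⟩ := Set.mem_mul.1 hx2
      have p1 : (rcoset G₀ (a*b) ∩ rcoset G₁ 1).Nonempty := by
        refine ⟨b, ?_, ?_⟩
        · show b * (a*b)⁻¹ ∈ G₀
          have e : b * (a*b)⁻¹ = a⁻¹ := by group
          rw [e]; exact G₀.inv_mem ha
        · show b * 1⁻¹ ∈ G₁
          simpa using hb
      have p2 : (rcoset G₀ (a*b) ∩ rcoset G₂ 1).Nonempty := by
        refine ⟨b', ?_, ?_⟩
        · show b' * (a*b)⁻¹ ∈ G₀
          have e : b' * (a*b)⁻¹ = b' * (a'*b')⁻¹ := by rw [hab']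
          rw [e]
          have e2 : b' * (a'*b')⁻¹ = a'⁻¹ := by group
          rw [e2]; exact G₀.inv_mem ha'
        · show b' * 1⁻¹ ∈ G₂
          simpa using hb'
      have p3 : (rcoset G₁ 1 ∩ rcoset G₂ 1).Nonempty := by
        refine ⟨1, ?_, ?_⟩
        · show (1:G) * 1⁻¹ ∈ G₁
          simpa using G₁.one_mem
        · show (1:G) * 1⁻¹ ∈ G₂
          simpa using G₂.one_mem
      obtain ⟨w, ⟨hw0, hw1⟩, hw2⟩ := h3 (a*b) 1 1 p1 p2 p3
      have hw0' : w * (a*b)⁻¹ ∈ G₀ := hw0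
      have hw1' : w ∈ G₁ := by simpa [rcoset] using hw1
      have hw2' : w ∈ G₂ := by simpa [rcoset] using hw2
      refine Set.mem_mul.2 ⟨(a*b) * w⁻¹, ?_, w, ⟨hw1', hw2'⟩, by group⟩
      have e : (a*b) * w⁻¹ = (w * (a*b)⁻¹)⁻¹ := by group
      rw [e]; exact G₀.inv_mem hw0'
end
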